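/- arXiv:1604.07595 — 10 statements merged into one kernel-verified Lean document; each statement's English description precedes it below -/
import Mathlib

section
/- For every continuous bilinear form T : ℝⁿ × ℝⁿ → ℝ (with the sup norm on each factor), one has (∑_{i,j=1}^{n} |T(e_i,e_j)|²)^{1/2} ≤ ‖T‖. -/
noncomputable def stdBasis (n : ℕ) (i : Fin n) : PiLp ⊤ (fun _ : Fin n => ℝ) :=
  (WithLp.equiv ⊤ (∀ _ : Fin n, ℝ)).symm (Pi.single i 1)

/-!
Average over all sign vectors `ε, δ ∈ {±1}ⁿ`, which lie in the unit ball of `ℓ∞ⁿ`. Since the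
coordinate signs `ε ↦ εᵢ` are orthonormal for the uniform average, the mean of
`T(∑ εᵢ eᵢ, y)²` over `ε` is `∑ᵢ T(eᵢ, y)²`; doing this in both variables shows that
`∑ᵢⱼ T(eᵢ, eⱼ)²` is an average of numbers `T(ε, δ)² ≤ ‖T‖²`.
-/

open Finset

section SignAveraging

variable {ι : Type*} [Fintype ι] [DecidableEq ι]

theorem sum_units_mul_units_eq (i j : ι) :
    ∑ ε : ι → ℤˣ, ((ε i : ℤ) : ℝ) * (ε j : ℤ) = if i = j then 2 ^ Fintype.card ι else 0 := by
  split_ifs with hij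
  · subst hij
    simp [← Int.cast_mul, ← Units.val_mul, Int.units_mul_self, Fintype.card_units_int]
  · -- flipping the sign of the `i`-th coordinate negates every summand
    set f : (ι → ℤˣ) → ℝ := fun ε => ((ε i : ℤ) : ℝ) * (ε j : ℤ)
    have hflip : ∀ ε, f (ε * Pi.mulSingle i (-1)) = -f ε := fun ε => by
      simp [f, Ne.symm hij]
    have hneg : ∑ ε, f ε = -∑ ε, f ε := by
      rw [← sum_neg_distrib, ← Equiv.sum_comp (Equiv.mulRight (Pi.mulSingle i (-1))) f]
      exact sum_congr rfl fun ε _ => hflip ε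
    linarith

theorem sum_sq_sum_units_mul (f : ι → ℝ) :
    ∑ ε : ι → ℤˣ, (∑ i, ((ε i : ℤ) : ℝ) * f i) ^ 2 = 2 ^ Fintype.card ι * ∑ i, f i ^ 2 := by
  calc ∑ ε : ι → ℤˣ, (∑ i, ((ε i : ℤ) : ℝ) * f i) ^ 2
      = ∑ i, ∑ j, f i * f j * ∑ ε : ι → ℤˣ, ((ε i : ℤ) : ℝ) * (ε j : ℤ) := by
        simp_rw [sq, sum_mul_sum, mul_sum]
        rw [sum_comm]
        refine sum_congr rfl fun i _ => ?_
        rw [sum_comm]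
        exact sum_congr rfl fun j _ => sum_congr rfl fun ε _ => by ring
    _ = 2 ^ Fintype.card ι * ∑ i, f i ^ 2 := by
        simp [sum_units_mul_units_eq, mul_sum, sq, mul_comm]

end SignAveraging

section LinftyBasis

variable {n : ℕ}

noncomputable def signVec (ε : Fin n → ℤˣ) : PiLp ⊤ (fun _ : Fin n => ℝ) :=
  WithLp.toLp ⊤ fun i => ((ε i : ℤ) : ℝ)

theorem norm_signVec_le (ε : Fin n → ℤˣ) : ‖signVec ε‖ ≤ 1 := by
  rw [PiLp.norm_eq_ciSup]
  refine Real.iSup_le (fun i => ?_) zero_le_one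
  rcases Int.units_eq_one_or (ε i) with h | h <;> simp [signVec, h]

theorem signVec_eq_sum (ε : Fin n → ℤˣ) :
    signVec ε = ∑ i, ((ε i : ℤ) : ℝ) • stdBasis n i := by
  ext k
  simp [signVec, stdBasis, Pi.single_apply]

theorem sum_sq_apply_signVec (φ : (PiLp ⊤ fun _ : Fin n => ℝ) →L[ℝ] ℝ) :
    ∑ ε : Fin n → ℤˣ, φ (signVec ε) ^ 2 = 2 ^ n * ∑ i, φ (stdBasis n i) ^ 2 := by
  simpa [signVec_eq_sum] using sum_sq_sum_units_mul fun i => φ (stdBasis n i)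

theorem sq_apply_signVec_le {E : Type*} [SeminormedAddCommGroup E] [NormedSpace ℝ E]
    (φ : (PiLp ⊤ fun _ : Fin n => ℝ) →L[ℝ] E) (ε : Fin n → ℤˣ) :
    ‖φ (signVec ε)‖ ^ 2 ≤ ‖φ‖ ^ 2 := by
  gcongr
  simpa using φ.le_of_opNorm_le le_rfl (signVec ε) |>.trans
    (mul_le_of_le_one_right (norm_nonneg φ) (norm_signVec_le ε))

theorem sum_sq_apply_stdBasis_le (φ : (PiLp ⊤ fun _ : Fin n => ℝ) →L[ℝ] ℝ) :
    ∑ i, φ (stdBasis n i) ^ 2 ≤ ‖φ‖ ^ 2 := by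
  refine le_of_mul_le_mul_left ?_ (by positivity : (0 : ℝ) < 2 ^ n)
  calc 2 ^ n * ∑ i, φ (stdBasis n i) ^ 2
      = ∑ ε : Fin n → ℤˣ, ‖φ (signVec ε)‖ ^ 2 := by simp [sum_sq_apply_signVec]
    _ ≤ ∑ _ε : Fin n → ℤˣ, ‖φ‖ ^ 2 := sum_le_sum fun ε _ => sq_apply_signVec_le φ ε
    _ = 2 ^ n * ‖φ‖ ^ 2 := by simp [Fintype.card_units_int]

theorem sum_sq_apply₂_stdBasis_le
    (T : (PiLp ⊤ fun _ : Fin n => ℝ) →L[ℝ] (PiLp ⊤ fun _ : Fin n => ℝ) →L[ℝ] ℝ) :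
    ∑ i, ∑ j, T (stdBasis n i) (stdBasis n j) ^ 2 ≤ ‖T‖ ^ 2 := by
  refine le_of_mul_le_mul_left ?_ (by positivity : (0 : ℝ) < 2 ^ n)
  calc 2 ^ n * ∑ i, ∑ j, T (stdBasis n i) (stdBasis n j) ^ 2
      = ∑ j, 2 ^ n * ∑ i, T.flip (stdBasis n j) (stdBasis n i) ^ 2 := by
        rw [sum_comm, mul_sum]; rfl
    _ = ∑ ε : Fin n → ℤˣ, ∑ j, T (signVec ε) (stdBasis n j) ^ 2 := by
        simp_rw [← sum_sq_apply_signVec, T.flip_apply]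
        exact sum_comm
    _ ≤ ∑ ε : Fin n → ℤˣ, ‖T (signVec ε)‖ ^ 2 :=
        sum_le_sum fun ε _ => sum_sq_apply_stdBasis_le (T (signVec ε))
    _ ≤ ∑ _ε : Fin n → ℤˣ, ‖T‖ ^ 2 := sum_le_sum fun ε _ => sq_apply_signVec_le T ε
    _ = 2 ^ n * ‖T‖ ^ 2 := by simp [Fintype.card_units_int]

end LinftyBasis

/-- For every continuous bilinear form `T : ℝⁿ × ℝⁿ → ℝ` (sup norms),
`(∑_{i,j} |T(e_i,e_j)|²)^{1/2} ≤ ‖T‖`. -/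
theorem stmt2 (n : ℕ)
    (T : (PiLp ⊤ fun _ : Fin n => ℝ) →L[ℝ] (PiLp ⊤ fun _ : Fin n => ℝ) →L[ℝ] ℝ) :
    (∑ i : Fin n, ∑ j : Fin n,
        |T (stdBasis n i) (stdBasis n j)| ^ 2) ^ ((1 : ℝ) / 2) ≤ ‖T‖ := by
  rw [← Real.sqrt_eq_rpow, Real.sqrt_le_left (norm_nonneg T)]
  simpa only [sq_abs] using sum_sq_apply₂_stdBasis_le T
end

section
/- For every m-linear form T : (ℝⁿ)^m → ℝ (with the sup norm on each factor), one has (∑_{i₁,…,i_m=1}^{n} |T(e_{i₁},…,e_{i_m})|²)^{1/2} ≤ ‖T‖. -/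
open Finset

noncomputable def boolSign (b : Bool) : ℝ := if b then 1 else -1

lemma boolSign_mul_self (b : Bool) : boolSign b * boolSign b = 1 := by
  cases b <;> norm_num [boolSign]

lemma abs_boolSign (b : Bool) : |boolSign b| = 1 := by
  cases b <;> norm_num [boolSign]

lemma boolSign_not (b : Bool) : boolSign (!b) = -boolSign b := by
  cases b <;> norm_num [boolSign]

section Orthogonality

variable {ι κ : Type*} [Fintype ι] [Fintype κ] [DecidableEq κ]

lemma sum_boolSign_mul_boolSign (i i' : κ) :
    ∑ e : κ → Bool, boolSign (e i) * boolSign (e i') =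
      if i = i' then 2 ^ Fintype.card κ else 0 := by
  split_ifs with h
  · subst h
    simp [boolSign_mul_self]
  · -- flipping the `i`-th sign is a bijection that negates every summand
    have hinv : Function.Involutive fun e : κ → Bool => Function.update e i (!e i) := fun e => by
      ext p; by_cases hp : p = i <;> simp [hp]
    have hneg := Equiv.sum_comp (hinv.toPerm _) fun e => boolSign (e i) * boolSign (e i')
    simp only [Function.Involutive.coe_toPerm, Function.update_self,
      Function.update_of_ne (Ne.symm h), boolSign_not, neg_mul, sum_neg_distrib] at hneg
    linarith

lemma sum_prod_boolSign_mul_prod_boolSign [DecidableEq ι] (j j' : ι → κ) :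
    ∑ ε : ι → κ → Bool, (∏ k, boolSign (ε k (j k))) * ∏ k, boolSign (ε k (j' k)) =
      if j = j' then (2 ^ Fintype.card κ) ^ Fintype.card ι else 0 := by
  simp_rw [← prod_mul_distrib]
  rw [← Fintype.piFinset_univ,
    sum_prod_piFinset (univ : Finset (κ → Bool))
      fun k e => boolSign (e (j k)) * boolSign (e (j' k))]
  simp_rw [sum_boolSign_mul_boolSign]
  split_ifs with h
  · simp [h]
  · obtain ⟨k, hk⟩ := Function.ne_iff.mp h
    exact prod_eq_zero (mem_univ k) (if_neg hk)

/-- Parseval's identity for the characters `ε ↦ ∏ₖ εₖ,ⱼₖ`. -/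
lemma sum_sq_sum_prod_boolSign [DecidableEq ι] (a : (ι → κ) → ℝ) :
    ∑ ε : ι → κ → Bool, (∑ j, (∏ k, boolSign (ε k (j k))) * a j) ^ 2 =
      (2 ^ Fintype.card κ) ^ Fintype.card ι * ∑ j, a j ^ 2 := by
  simp_rw [sq, sum_mul_sum, mul_mul_mul_comm _ (a _)]
  rw [sum_comm]
  simp_rw [sum_comm (s := (univ : Finset (ι → κ → Bool))), ← sum_mul,
    sum_prod_boolSign_mul_prod_boolSign, ite_mul, zero_mul, sum_ite_eq, if_pos (mem_univ _),
    mul_sum]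

end Orthogonality

noncomputable def signVector {n : ℕ} (e : Fin n → Bool) : PiLp ⊤ (fun _ : Fin n => ℝ) :=
  (WithLp.equiv ⊤ (∀ _ : Fin n, ℝ)).symm fun i => boolSign (e i)

lemma signVector_eq_sum {n : ℕ} (e : Fin n → Bool) :
    signVector e = ∑ i, boolSign (e i) • stdBasis n i := by
  ext p
  simp [signVector, stdBasis, Pi.single_apply]

lemma norm_signVector_le_one {n : ℕ} (e : Fin n → Bool) : ‖signVector e‖ ≤ 1 := by
  rw [signVector, WithLp.equiv_symm_apply, PiLp.norm_toLp]
  exact (pi_norm_le_iff_of_nonneg zero_le_one).2 fun i => (abs_boolSign (e i)).le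

section SignVectors

variable {ι : Type*} [Fintype ι] {n : ℕ}
  (T : ContinuousMultilinearMap ℝ (fun _ : ι => PiLp ⊤ fun _ : Fin n => ℝ) ℝ)

lemma apply_signVector_eq_sum [DecidableEq ι] (ε : ι → Fin n → Bool) :
    T (fun k => signVector (ε k)) =
      ∑ j : ι → Fin n, (∏ k, boolSign (ε k (j k))) * T (fun k => stdBasis n (j k)) := by
  simp_rw [signVector_eq_sum, T.map_sum, T.map_smul_univ, smul_eq_mul]

lemma abs_apply_signVector_le (ε : ι → Fin n → Bool) :
    |T (fun k => signVector (ε k))| ≤ ‖T‖ := by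
  simpa using T.le_opNorm_mul_prod_of_le fun k => norm_signVector_le_one (ε k)

lemma sum_sq_apply_stdBasis_le_sq_norm [DecidableEq ι] :
    ∑ j : ι → Fin n, T (fun k => stdBasis n (j k)) ^ 2 ≤ ‖T‖ ^ 2 := by
  have hcube :
      ((2 : ℝ) ^ n) ^ Fintype.card ι * ∑ j : ι → Fin n, T (fun k => stdBasis n (j k)) ^ 2 ≤
        ((2 : ℝ) ^ n) ^ Fintype.card ι * ‖T‖ ^ 2 := by
    calc _ = ∑ ε : ι → Fin n → Bool, T (fun k => signVector (ε k)) ^ 2 := by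
          simp_rw [apply_signVector_eq_sum, sum_sq_sum_prod_boolSign, Fintype.card_fin]
      _ ≤ ∑ _ε : ι → Fin n → Bool, ‖T‖ ^ 2 := by
          refine sum_le_sum fun ε _ => sq_le_sq.mpr ?_
          exact (abs_apply_signVector_le T ε).trans (le_abs_self _)
      _ = _ := by simp
  exact le_of_mul_le_mul_left hcube (by positivity)

end SignVectors

/-- For every `m`-linear form `T : (ℝⁿ)^m → ℝ` (sup norms),
`(∑_{i₁,…,i_m} |T(e_{i₁},…,e_{i_m})|²)^{1/2} ≤ ‖T‖`. -/
theorem stmt3 (m n : ℕ)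
    (T : ContinuousMultilinearMap ℝ (fun _ : Fin m => PiLp ⊤ fun _ : Fin n => ℝ) ℝ) :
    (∑ j : Fin m → Fin n, |T (fun k => stdBasis n (j k))| ^ 2) ^ ((1 : ℝ) / 2)
      ≤ ‖T‖ := by
  rw [← Real.sqrt_eq_rpow, Real.sqrt_le_left (norm_nonneg T)]
  simpa only [sq_abs] using sum_sq_apply_stdBasis_le_sq_norm T
end

section
/- Let S₃ : (ℝ⁴)×(ℝ²)×(ℝ²) → ℝ be the trilinear form S₃(x,y,z) = (z₁+z₂)(x₁y₁+x₁y₂+x₂y₁−x₂y₂) + (z₁−z₂)(x₃y₁+x₃y₂+x₄y₁−x₄y₂). Then the operator norm of S₃ with respect to sup norms equals 4. -/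
set_option maxSynthPendingDepth 3

/-!
Writing `y₊ = y₀ + y₁`, `y₋ = y₀ - y₁` (and likewise for `z`), the form is
`S₃ = (x₀ y₊ + x₁ y₋) z₊ + (x₂ y₊ + x₃ y₋) z₋`. Each bracket has the shape `u a₊ + v a₋`, which is
bounded by `max(|u|, |v|) (|a₊| + |a₋|) = 2 max(|u|, |v|) max(|a₀|, |a₁|)`; applying this twice
gives `|S₃| ≤ 4 ‖x‖ ‖y‖ ‖z‖`. Equality is attained at `x = (1,1,1,1)`, `y = z = (1,0)`.
-/

section OrderedRing

variable {α : Type*} [CommRing α] [LinearOrder α] [IsStrictOrderedRing α]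

theorem abs_add_add_abs_sub_le {a b N : α} (ha : |a| ≤ N) (hb : |b| ≤ N) :
    |a + b| + |a - b| ≤ 2 * N := by
  obtain ⟨ha₁, ha₂⟩ := abs_le.mp ha
  obtain ⟨hb₁, hb₂⟩ := abs_le.mp hb
  cases abs_cases (a + b) <;> cases abs_cases (a - b) <;> linarith

theorem abs_mul_add_mul_sub_le {u v a b M N : α} (hu : |u| ≤ M) (hv : |v| ≤ M)
    (ha : |a| ≤ N) (hb : |b| ≤ N) : |u * (a + b) + v * (a - b)| ≤ 2 * M * N := by
  have hM : 0 ≤ M := (abs_nonneg u).trans hu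
  calc |u * (a + b) + v * (a - b)| ≤ |u| * |a + b| + |v| * |a - b| := by
        simpa only [abs_mul] using abs_add_le (u * (a + b)) (v * (a - b))
    _ ≤ M * |a + b| + M * |a - b| := by gcongr
    _ = M * (|a + b| + |a - b|) := by ring
    _ ≤ M * (2 * N) := by gcongr; exact abs_add_add_abs_sub_le ha hb
    _ = 2 * M * N := by ring

end OrderedRing

namespace ContinuousLinearMap

variable {𝕜 E F G H : Type*} [NontriviallyNormedField 𝕜]
  [SeminormedAddCommGroup E] [NormedSpace 𝕜 E] [SeminormedAddCommGroup F] [NormedSpace 𝕜 F]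
  [SeminormedAddCommGroup G] [NormedSpace 𝕜 G] [SeminormedAddCommGroup H] [NormedSpace 𝕜 H]

theorem opNorm_le_bound₃ (f : E →L[𝕜] F →L[𝕜] G →L[𝕜] H) {C : ℝ} (h0 : 0 ≤ C)
    (hC : ∀ x y z, ‖f x y z‖ ≤ C * ‖x‖ * ‖y‖ * ‖z‖) : ‖f‖ ≤ C :=
  f.opNorm_le_bound₂ h0 fun x y => (f x y).opNorm_le_bound (by positivity) (hC x y)

theorem le_of_opNorm₃_le_of_le (f : E →L[𝕜] F →L[𝕜] G →L[𝕜] H) {x : E} {y : F} {z : G}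
    {a b c d : ℝ} (hf : ‖f‖ ≤ a) (hx : ‖x‖ ≤ b) (hy : ‖y‖ ≤ c) (hz : ‖z‖ ≤ d) :
    ‖f x y z‖ ≤ a * b * c * d :=
  (f x y).le_of_opNorm_le_of_le (f.le_of_opNorm₂_le_of_le hf hx hy) hz

end ContinuousLinearMap

/-- The trilinear form
`S₃(x,y,z) = (z₁+z₂)(x₁y₁+x₁y₂+x₂y₁−x₂y₂) + (z₁−z₂)(x₃y₁+x₃y₂+x₄y₁−x₄y₂)`
on `ℓ∞⁴ × ℓ∞² × ℓ∞²` has operator norm `4`. -/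
theorem stmt5
    (S : (PiLp ⊤ fun _ : Fin 4 => ℝ) →L[ℝ] (PiLp ⊤ fun _ : Fin 2 => ℝ) →L[ℝ]
      (PiLp ⊤ fun _ : Fin 2 => ℝ) →L[ℝ] ℝ)
    (hS : ∀ (x : PiLp ⊤ fun _ : Fin 4 => ℝ) (y z : PiLp ⊤ fun _ : Fin 2 => ℝ),
      S x y z = (z 0 + z 1) * (x 0 * y 0 + x 0 * y 1 + x 1 * y 0 - x 1 * y 1)
        + (z 0 - z 1) * (x 2 * y 0 + x 2 * y 1 + x 3 * y 0 - x 3 * y 1)) :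
    ‖S‖ = 4 := by
  refine le_antisymm (S.opNorm_le_bound₃ (by norm_num) fun x y z => ?_) ?_
  · have hx := PiLp.norm_apply_le x
    have hy := PiLp.norm_apply_le y
    have hz := PiLp.norm_apply_le z
    have hA : |x 0 * (y 0 + y 1) + x 1 * (y 0 - y 1)| ≤ 2 * ‖x‖ * ‖y‖ :=
      abs_mul_add_mul_sub_le (hx 0) (hx 1) (hy 0) (hy 1)
    have hB : |x 2 * (y 0 + y 1) + x 3 * (y 0 - y 1)| ≤ 2 * ‖x‖ * ‖y‖ :=
      abs_mul_add_mul_sub_le (hx 2) (hx 3) (hy 0) (hy 1)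
    calc ‖S x y z‖
        = |(x 0 * (y 0 + y 1) + x 1 * (y 0 - y 1)) * (z 0 + z 1)
            + (x 2 * (y 0 + y 1) + x 3 * (y 0 - y 1)) * (z 0 - z 1)| := by
          rw [hS, Real.norm_eq_abs]; congr 1; ring
      _ ≤ 2 * (2 * ‖x‖ * ‖y‖) * ‖z‖ := abs_mul_add_mul_sub_le hA hB (hz 0) (hz 1)
      _ = 4 * ‖x‖ * ‖y‖ * ‖z‖ := by ring
  · have h := S.le_of_opNorm₃_le_of_le le_rfl (b := 1) (c := 1) (d := 1)
      (x := WithLp.toLp ⊤ (Function.const _ 1)) (y := WithLp.toLp ⊤ (Pi.single 0 1))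
      (z := WithLp.toLp ⊤ (Pi.single 0 1)) (by simp) (by simp) (by simp)
    norm_num [hS] at h
    exact h
end

section
/- The optimal constant C_{(2,…,2,1)m} in the mixed (ℓ₁,ℓ₂)-Littlewood inequality (∑_{j₁,…,j_{m−1}} (∑_{j_m} |U(e_{j₁},…,e_{j_m})|)²)^{1/2} ≤ C ‖U‖, valid over all m-linear forms U on c₀ (equivalently: over all n and all m-linear forms on (ℝⁿ)^m with sup norms), is at least (√2)^{m−1}. -/
namespace Stmt7Aux

/-- Coordinate projection on `ℓ∞ⁿ` as a linear map. -/
noncomputable def pr (n : ℕ) (j : Fin n) : PiLp ⊤ (fun _ : Fin n => ℝ) →ₗ[ℝ] ℝ :=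
  (LinearMap.proj j).comp (WithLp.linearEquiv ⊤ ℝ (∀ _ : Fin n, ℝ)).toLinearMap

lemma pr_stdBasis (n : ℕ) (j i : Fin n) :
    pr n j (stdBasis n i) = if j = i then 1 else 0 := by
  show (WithLp.equiv ⊤ (∀ _ : Fin n, ℝ)) (stdBasis n i) j = _
  rw [stdBasis, Equiv.apply_symm_apply, Pi.single_apply]

lemma abs_pr_le (n : ℕ) (j : Fin n) (x : PiLp ⊤ (fun _ : Fin n => ℝ)) :
    |pr n j x| ≤ ‖x‖ := by
  rw [PiLp.norm_eq_ciSup]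
  exact le_ciSup (f := fun i => ‖x i‖) (Set.Finite.bddAbove (Set.finite_range _)) j

variable (m : ℕ)

/-- Walsh signs. -/
noncomputable def sgn (t : Fin m) (j : Fin (2 ^ m)) : ℝ :=
  if (finFunctionFinEquiv.symm j) t = 0 then 1 else -1

lemma abs_sgn (t : Fin m) (j : Fin (2 ^ m)) : |sgn m t j| = 1 := by
  unfold sgn; split <;> simp

/-- The linear functional used in slot `i`, for the `j`-th summand. -/
noncomputable def ell (i : Fin (m + 1)) (j : Fin (2 ^ m)) :
    PiLp ⊤ (fun _ : Fin (2 ^ m) => ℝ) →ₗ[ℝ] ℝ :=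
  if h : (i : ℕ) < m then pr (2 ^ m) 0 + sgn m ⟨i, h⟩ j • pr (2 ^ m) 1 else pr (2 ^ m) j

lemma ell_last (j : Fin (2 ^ m)) : ell m (Fin.last m) j = pr (2 ^ m) j := by
  rw [ell, dif_neg (by simp)]

lemma ell_castSucc (t : Fin m) (j : Fin (2 ^ m)) (x : PiLp ⊤ (fun _ : Fin (2 ^ m) => ℝ)) :
    ell m t.castSucc j x = pr (2 ^ m) 0 x + sgn m t j * pr (2 ^ m) 1 x := by
  rw [ell, dif_pos (by simp)]
  simp [Fin.eta]

/-- The witness multilinear form: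
`U(x⁽¹⁾,…,x⁽ᵐ⁾,y) = ∑_{j<2^m} y_j ∏_t (x⁽ᵗ⁾₀ + ε(t,j) x⁽ᵗ⁾₁)`. -/
noncomputable def U0 :
    MultilinearMap ℝ (fun _ : Fin (m + 1) => PiLp ⊤ fun _ : Fin (2 ^ m) => ℝ) ℝ :=
  ∑ j : Fin (2 ^ m),
    (MultilinearMap.mkPiAlgebra ℝ (Fin (m + 1)) ℝ).compLinearMap fun i => ell m i j

lemma U0_apply (x : ∀ _ : Fin (m + 1), PiLp ⊤ fun _ : Fin (2 ^ m) => ℝ) :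
    U0 m x = ∑ j : Fin (2 ^ m), ∏ i : Fin (m + 1), ell m i j (x i) := by
  simp [U0]

lemma pair_bound (a b M : ℝ) (ha : |a| ≤ M) (hb : |b| ≤ M) : |a + b| + |a - b| ≤ 2 * M := by
  obtain ⟨ha1, ha2⟩ := abs_le.mp ha
  obtain ⟨hb1, hb2⟩ := abs_le.mp hb
  rcases abs_cases (a + b) with ⟨h1, -⟩ | ⟨h1, -⟩ <;>
    rcases abs_cases (a - b) with ⟨h2, -⟩ | ⟨h2, -⟩ <;> linarith

lemma sum_prod_abs (a b : Fin m → ℝ) :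
    ∑ j : Fin (2 ^ m), ∏ t : Fin m, |a t + sgn m t j * b t|
      = ∏ t : Fin m, (|a t + b t| + |a t - b t|) := by
  rw [← Equiv.sum_comp (finFunctionFinEquiv (m := 2) (n := m))
        (fun j => ∏ t : Fin m, |a t + sgn m t j * b t|)]
  have h : ∀ (g : Fin m → Fin 2) (t : Fin m),
      sgn m t (finFunctionFinEquiv g) = if g t = 0 then 1 else -1 := by
    intro g t; rw [sgn, Equiv.symm_apply_apply]
  calc ∑ g : Fin m → Fin 2, ∏ t : Fin m, |a t + sgn m t (finFunctionFinEquiv g) * b t|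
      = ∑ g : Fin m → Fin 2, ∏ t : Fin m, |a t + (if g t = 0 then 1 else -1) * b t| := by
        refine Finset.sum_congr rfl fun g _ => Finset.prod_congr rfl fun t _ => by rw [h]
    _ = ∏ t : Fin m, ∑ i : Fin 2, |a t + (if i = 0 then 1 else -1) * b t| := by
        rw [← Fintype.piFinset_univ]
        exact Finset.sum_prod_piFinset Finset.univ
          fun t i => |a t + (if i = 0 then 1 else -1) * b t|
    _ = ∏ t : Fin m, (|a t + b t| + |a t - b t|) := by
        refine Finset.prod_congr rfl fun t _ => ?_
        rw [Fin.sum_univ_two]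
        norm_num
        rw [show a t + -b t = a t - b t by ring]

lemma U0_bound (x : ∀ _ : Fin (m + 1), PiLp ⊤ fun _ : Fin (2 ^ m) => ℝ) :
    |U0 m x| ≤ (2 : ℝ) ^ m * ∏ i : Fin (m + 1), ‖x i‖ := by
  rw [U0_apply]
  set a : Fin m → ℝ := fun t => pr (2 ^ m) 0 (x t.castSucc) with ha
  set b : Fin m → ℝ := fun t => pr (2 ^ m) 1 (x t.castSucc) with hb
  calc |∑ j : Fin (2 ^ m), ∏ i : Fin (m + 1), ell m i j (x i)|
      ≤ ∑ j : Fin (2 ^ m), |∏ i : Fin (m + 1), ell m i j (x i)| :=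
        Finset.abs_sum_le_sum_abs _ _
    _ = ∑ j : Fin (2 ^ m), (∏ t : Fin m, |a t + sgn m t j * b t|)
          * |pr (2 ^ m) j (x (Fin.last m))| := by
        refine Finset.sum_congr rfl fun j _ => ?_
        rw [Fin.prod_univ_castSucc, abs_mul, Finset.abs_prod, ell_last]
        congr 1
        exact Finset.prod_congr rfl fun t _ => by rw [ell_castSucc]
    _ ≤ ∑ j : Fin (2 ^ m), (∏ t : Fin m, |a t + sgn m t j * b t|) * ‖x (Fin.last m)‖ := by
        refine Finset.sum_le_sum fun j _ => ?_
        exact mul_le_mul_of_nonneg_left (abs_pr_le _ _ _)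
          (Finset.prod_nonneg fun t _ => abs_nonneg _)
    _ = (∏ t : Fin m, (|a t + b t| + |a t - b t|)) * ‖x (Fin.last m)‖ := by
        rw [← Finset.sum_mul, sum_prod_abs]
    _ ≤ (∏ t : Fin m, 2 * ‖x t.castSucc‖) * ‖x (Fin.last m)‖ := by
        refine mul_le_mul_of_nonneg_right ?_ (norm_nonneg _)
        refine Finset.prod_le_prod (fun t _ => by positivity) fun t _ => ?_
        exact pair_bound _ _ _ (abs_pr_le _ _ _) (abs_pr_le _ _ _)
    _ = (2 : ℝ) ^ m * ∏ i : Fin (m + 1), ‖x i‖ := by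
        rw [Finset.prod_mul_distrib, Finset.prod_const, Finset.card_univ, Fintype.card_fin,
          Fin.prod_univ_castSucc (f := fun i => ‖x i‖)]
        ring

/-- Indicator of `{0, 1}` in `Fin (2 ^ m)`. -/
noncomputable def ind (i : Fin (2 ^ m)) : ℝ :=
  (if (0 : Fin (2 ^ m)) = i then 1 else 0) + (if (1 : Fin (2 ^ m)) = i then 1 else 0)

lemma zero_ne_one' (hm : 1 ≤ m) : (0 : Fin (2 ^ m)) ≠ 1 := by
  have h2 : 1 < 2 ^ m := Nat.one_lt_two_pow_iff.mpr (by omega)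
  simp [Fin.ext_iff, Fin.val_one', Nat.mod_eq_of_lt h2]

lemma U0_basis (jr : Fin m → Fin (2 ^ m)) (jl : Fin (2 ^ m)) :
    U0 m (Fin.snoc (fun s => stdBasis (2 ^ m) (jr s)) (stdBasis (2 ^ m) jl)) =
      ∏ t : Fin m, ((if (0 : Fin (2 ^ m)) = jr t then (1 : ℝ) else 0)
        + sgn m t jl * (if (1 : Fin (2 ^ m)) = jr t then 1 else 0)) := by
  rw [U0_apply]
  have hterm : ∀ j : Fin (2 ^ m),
      (∏ i : Fin (m + 1),
        ell m i j ((Fin.snoc (fun s => stdBasis (2 ^ m) (jr s)) (stdBasis (2 ^ m) jl) :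
          ∀ _ : Fin (m + 1), PiLp ⊤ fun _ : Fin (2 ^ m) => ℝ) i))
      = (∏ t : Fin m, ((if (0 : Fin (2 ^ m)) = jr t then (1 : ℝ) else 0)
          + sgn m t j * (if (1 : Fin (2 ^ m)) = jr t then 1 else 0)))
        * (if j = jl then 1 else 0) := by
    intro j
    rw [Fin.prod_univ_castSucc]
    congr 1
    · refine Finset.prod_congr rfl fun t _ => ?_
      rw [Fin.snoc_castSucc, ell_castSucc, pr_stdBasis, pr_stdBasis]
    · rw [Fin.snoc_last, ell_last, pr_stdBasis]
  rw [Finset.sum_congr rfl fun j _ => hterm j]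
  simp [Finset.sum_ite_eq']

lemma abs_factor (hm : 1 ≤ m) (t : Fin m) (jl : Fin (2 ^ m)) (i : Fin (2 ^ m)) :
    |(if (0 : Fin (2 ^ m)) = i then (1 : ℝ) else 0)
        + sgn m t jl * (if (1 : Fin (2 ^ m)) = i then 1 else 0)| = ind m i := by
  have h01 := zero_ne_one' m hm
  unfold ind
  by_cases h0 : (0 : Fin (2 ^ m)) = i
  · rw [if_pos h0, if_neg (fun h1 => h01 (h0.trans h1.symm))]
    norm_num
  · by_cases h1 : (1 : Fin (2 ^ m)) = i
    · simp only [if_pos h1, if_neg h0, mul_one, zero_add, abs_sgn]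
    · simp [h0, h1]

lemma ind_sq (hm : 1 ≤ m) (i : Fin (2 ^ m)) : ind m i ^ 2 = ind m i := by
  have h01 := zero_ne_one' m hm
  unfold ind
  by_cases h0 : (0 : Fin (2 ^ m)) = i
  · rw [if_pos h0, if_neg (fun h1 => h01 (h0.trans h1.symm))]; norm_num
  · by_cases h1 : (1 : Fin (2 ^ m)) = i <;> simp [h0, h1]

lemma sum_ind : ∑ i : Fin (2 ^ m), ind m i = 2 := by
  unfold ind
  rw [Finset.sum_add_distrib, Finset.sum_ite_eq, Finset.sum_ite_eq]
  simp
  norm_num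

lemma total (hm : 1 ≤ m) :
    ∑ jr : Fin m → Fin (2 ^ m), (∑ jl : Fin (2 ^ m),
      |U0 m (Fin.snoc (fun s => stdBasis (2 ^ m) (jr s)) (stdBasis (2 ^ m) jl))|) ^ 2
      = (8 : ℝ) ^ m := by
  have key : ∀ (jr : Fin m → Fin (2 ^ m)) (jl : Fin (2 ^ m)),
      |U0 m (Fin.snoc (fun s => stdBasis (2 ^ m) (jr s)) (stdBasis (2 ^ m) jl))|
        = ∏ t : Fin m, ind m (jr t) := by
    intro jr jl
    rw [U0_basis, Finset.abs_prod]
    exact Finset.prod_congr rfl fun t _ => abs_factor m hm t jl (jr t)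
  calc ∑ jr : Fin m → Fin (2 ^ m), (∑ jl : Fin (2 ^ m),
        |U0 m (Fin.snoc (fun s => stdBasis (2 ^ m) (jr s)) (stdBasis (2 ^ m) jl))|) ^ 2
      = ∑ jr : Fin m → Fin (2 ^ m),
          ((2 : ℝ) ^ m * ∏ t : Fin m, ind m (jr t)) ^ 2 := by
        refine Finset.sum_congr rfl fun jr _ => ?_
        rw [Finset.sum_congr rfl fun jl _ => key jr jl, Finset.sum_const, Finset.card_univ,
          Fintype.card_fin, nsmul_eq_mul]
        push_cast
        ring_nf
    _ = (4 : ℝ) ^ m * ∑ jr : Fin m → Fin (2 ^ m), ∏ t : Fin m, ind m (jr t) := by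
        rw [Finset.mul_sum]
        refine Finset.sum_congr rfl fun jr _ => ?_
        rw [mul_pow, ← Finset.prod_pow]
        rw [Finset.prod_congr rfl fun t _ => ind_sq m hm (jr t)]
        congr 1
        rw [← pow_mul, Nat.mul_comm, pow_mul]
        norm_num
    _ = (4 : ℝ) ^ m * (2 : ℝ) ^ m := by
        congr 1
        rw [← Fintype.piFinset_univ,
          Finset.sum_prod_piFinset Finset.univ fun t i => ind m i]
        rw [Finset.prod_congr rfl fun t _ => sum_ind m, Finset.prod_const, Finset.card_univ,
          Fintype.card_fin]
    _ = (8 : ℝ) ^ m := by rw [← mul_pow]; norm_num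

/-- The witness as a continuous multilinear map. -/
noncomputable def Ufull :
    ContinuousMultilinearMap ℝ (fun _ : Fin (m + 1) => PiLp ⊤ fun _ : Fin (2 ^ m) => ℝ) ℝ :=
  (U0 m).mkContinuous ((2 : ℝ) ^ m) fun x => by
    rw [Real.norm_eq_abs]; exact U0_bound m x

lemma Ufull_norm_le : ‖Ufull m‖ ≤ (2 : ℝ) ^ m :=
  MultilinearMap.mkContinuous_norm_le _ (by positivity) _

lemma Ufull_apply (x : ∀ _ : Fin (m + 1), PiLp ⊤ fun _ : Fin (2 ^ m) => ℝ) :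
    Ufull m x = U0 m x := rfl

end Stmt7Aux

/-- Any constant `C` valid in the mixed `(ℓ₁,ℓ₂)`-Littlewood inequality with
exponent `(2,…,2,1)` for `(m+1)`-linear forms (over all `n`, on `(ℝⁿ)^{m+1}` with
sup norms) satisfies `C ≥ (√2)^m`.  (For `m + 1`-linear forms the lower bound is
`(√2)^{(m+1)-1}`.) -/
theorem stmt7 (m : ℕ) (hm : 1 ≤ m) (C : ℝ)
    (hC : ∀ (n : ℕ)
      (U : ContinuousMultilinearMap ℝ (fun _ : Fin (m + 1) => PiLp ⊤ fun _ : Fin n => ℝ) ℝ),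
      (∑ jr : Fin m → Fin n,
          (∑ jl : Fin n,
            |U (Fin.snoc (fun s => stdBasis n (jr s)) (stdBasis n jl))|) ^ 2) ^ ((1 : ℝ) / 2)
        ≤ C * ‖U‖) :
    Real.sqrt 2 ^ m ≤ C := by
  have h := hC (2 ^ m) (Stmt7Aux.Ufull m)
  have hsum : (∑ jr : Fin m → Fin (2 ^ m),
      (∑ jl : Fin (2 ^ m),
        |Stmt7Aux.Ufull m (Fin.snoc (fun s => stdBasis (2 ^ m) (jr s))
          (stdBasis (2 ^ m) jl))|) ^ 2) = (8 : ℝ) ^ m := by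
    rw [← Stmt7Aux.total m hm]
    exact Finset.sum_congr rfl fun jr _ => by
      rw [Finset.sum_congr rfl fun jl _ => by rw [Stmt7Aux.Ufull_apply]]
  rw [hsum] at h
  have h8 : ((8 : ℝ) ^ m) ^ ((1 : ℝ) / 2) = 2 ^ m * Real.sqrt 2 ^ m := by
    rw [← Real.sqrt_eq_rpow]
    have hsq : ((2 : ℝ) ^ m * Real.sqrt 2 ^ m) ^ 2 = (8 : ℝ) ^ m := by
      have hs : Real.sqrt 2 ^ 2 = 2 := Real.sq_sqrt (by norm_num)
      calc ((2 : ℝ) ^ m * Real.sqrt 2 ^ m) ^ 2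
          = (((2 : ℝ) * Real.sqrt 2) ^ m) ^ 2 := by rw [← mul_pow]
        _ = (((2 : ℝ) * Real.sqrt 2) ^ 2) ^ m := by
            rw [← pow_mul, Nat.mul_comm, pow_mul]
        _ = ((2 : ℝ) ^ 2 * Real.sqrt 2 ^ 2) ^ m := by rw [mul_pow]
        _ = (8 : ℝ) ^ m := by rw [hs]; norm_num
    rw [← hsq, Real.sqrt_sq (by positivity)]
  rw [h8] at h
  have hU := Stmt7Aux.Ufull_norm_le m
  have hpos : (0 : ℝ) < 2 ^ m * Real.sqrt 2 ^ m := by positivity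
  have hC0 : 0 ≤ C := by
    by_contra hc
    push_neg at hc
    nlinarith [norm_nonneg (Stmt7Aux.Ufull m)]
  have h2 : (2 : ℝ) ^ m * Real.sqrt 2 ^ m ≤ 2 ^ m * C := by
    calc (2 : ℝ) ^ m * Real.sqrt 2 ^ m ≤ C * ‖Stmt7Aux.Ufull m‖ := h
      _ ≤ C * 2 ^ m := mul_le_mul_of_nonneg_left hU hC0
      _ = 2 ^ m * C := mul_comm _ _
  exact le_of_mul_le_mul_left h2 (by positivity)
end

section
/- Let T₂'(x,y) = a(x₁y₁ + x₁y₂) + a(x₃y₁ + x₄y₂) + a(x₃y₅ + x₄y₅) with a ≠ 0 be a bilinear form on ℝ⁵ × ℝ⁵ with sup norms (signs all +). Then ‖T₂'‖ ≥ 4|a|, and consequently (∑_{i,j}|T₂'(e_i,e_j)|^{4/3})^{3/4} / ‖T₂'‖ ≤ 6^{3/4}/4 < √2, so T₂' is not an extremum of Littlewood's 4/3 inequality. -/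
lemma stdBasis_apply (n : ℕ) (i j : Fin n) : stdBasis n i j = if j = i then 1 else 0 := by
  simp [stdBasis]

lemma abs_apply_const_one_le_opNorm {ι κ : Type*} [Fintype ι] [Nonempty ι] [Fintype κ]
    [Nonempty κ] (T : (PiLp ⊤ fun _ : ι => ℝ) →L[ℝ] (PiLp ⊤ fun _ : κ => ℝ) →L[ℝ] ℝ) :
    |T (WithLp.toLp ⊤ (Function.const ι 1)) (WithLp.toLp ⊤ (Function.const κ 1))| ≤ ‖T‖ := by
  simpa [PiLp.norm_toLp_const'] using T.le_opNorm₂ (WithLp.toLp ⊤ (Function.const ι 1))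
    (WithLp.toLp ⊤ (Function.const κ 1))

lemma rpow_inv_mul_rpow {b c p : ℝ} (hb : 0 ≤ b) (hc : 0 ≤ c) (hp : p ≠ 0) :
    (c * b ^ p) ^ p⁻¹ = c ^ p⁻¹ * b := by
  rw [Real.mul_rpow hc (Real.rpow_nonneg hb p), Real.rpow_rpow_inv hb hp]

lemma mul_div_le_div_of_mul_le {b c k M : ℝ} (hb : 0 ≤ b) (hc : 0 ≤ c) (hk : 0 < k)
    (hM : k * b ≤ M) : c * b / M ≤ c / k := by
  rcases hb.eq_or_lt with rfl | hb
  · simpa using div_nonneg hc hk.le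
  calc c * b / M ≤ c * b / (k * b) := div_le_div_of_nonneg_left (by positivity) (by positivity) hM
    _ = c / k := mul_div_mul_right c k hb.ne'

lemma six_rpow_three_quarters_lt_four : (6 : ℝ) ^ ((3 : ℝ) / 4) < 4 := by
  have h : ((6 : ℝ) ^ ((3 : ℝ) / 4)) ^ (4 : ℝ) = 4 ^ (4 : ℝ) - 40 := by
    rw [← Real.rpow_mul (by norm_num)]
    norm_num
  rw [← Real.rpow_lt_rpow_iff (by positivity) (by norm_num) (by norm_num : (0 : ℝ) < 4), h]
  linarith

def IsT₂' (a : ℝ) (T : (PiLp ⊤ fun _ : Fin 5 => ℝ) →L[ℝ] (PiLp ⊤ fun _ : Fin 5 => ℝ) →L[ℝ] ℝ) :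
    Prop :=
  ∀ x y : PiLp ⊤ fun _ : Fin 5 => ℝ,
    T x y = a * (x 0 * y 0 + x 0 * y 1) + a * (x 2 * y 0 + x 3 * y 1) + a * (x 2 * y 4 + x 3 * y 4)

section IsT₂'

variable {a : ℝ} {T : (PiLp ⊤ fun _ : Fin 5 => ℝ) →L[ℝ] (PiLp ⊤ fun _ : Fin 5 => ℝ) →L[ℝ] ℝ}

lemma six_mul_abs_le_opNorm (hT : IsT₂' a T) : 6 * |a| ≤ ‖T‖ := by
  have h6 : T (WithLp.toLp ⊤ (Function.const _ 1)) (WithLp.toLp ⊤ (Function.const _ 1)) = 6 * a := by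
    rw [hT]
    simp only [Function.const_apply, mul_one]
    ring
  have h := abs_apply_const_one_le_opNorm T
  rwa [h6, abs_mul, abs_of_pos (by norm_num : (0 : ℝ) < 6)] at h

lemma sum_abs_apply_stdBasis_rpow (hT : IsT₂' a T) :
    ∑ i : Fin 5, ∑ j : Fin 5, |T (stdBasis 5 i) (stdBasis 5 j)| ^ ((4 : ℝ) / 3)
      = 6 * |a| ^ ((4 : ℝ) / 3) := by
  simp only [Fin.sum_univ_five, hT _ _, stdBasis_apply, Fin.isValue, Fin.reduceEq, reduceIte]
  norm_num [Real.zero_rpow (show (4 : ℝ) / 3 ≠ 0 by norm_num)]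
  ring

end IsT₂'

theorem stmt13_general (a : ℝ)
    (T : (PiLp ⊤ fun _ : Fin 5 => ℝ) →L[ℝ] (PiLp ⊤ fun _ : Fin 5 => ℝ) →L[ℝ] ℝ)
    (hT : ∀ x y : PiLp ⊤ fun _ : Fin 5 => ℝ,
      T x y = a * (x 0 * y 0 + x 0 * y 1) + a * (x 2 * y 0 + x 3 * y 1)
        + a * (x 2 * y 4 + x 3 * y 4)) :
    4 * |a| ≤ ‖T‖
      ∧ (∑ i : Fin 5, ∑ j : Fin 5,
            |T (stdBasis 5 i) (stdBasis 5 j)| ^ ((4 : ℝ) / 3)) ^ ((3 : ℝ) / 4) / ‖T‖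
          ≤ (6 : ℝ) ^ ((3 : ℝ) / 4) / 4
      ∧ (6 : ℝ) ^ ((3 : ℝ) / 4) / 4 < Real.sqrt 2 := by
  have hnorm : 4 * |a| ≤ ‖T‖ := by linarith [six_mul_abs_le_opNorm hT, abs_nonneg a]
  refine ⟨hnorm, ?_, ?_⟩
  · rw [sum_abs_apply_stdBasis_rpow hT, show (3 : ℝ) / 4 = ((4 : ℝ) / 3)⁻¹ by norm_num,
      rpow_inv_mul_rpow (abs_nonneg a) (by norm_num) (by norm_num)]
    exact mul_div_le_div_of_mul_le (abs_nonneg a) (by positivity) (by norm_num) hnorm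
  · calc (6 : ℝ) ^ ((3 : ℝ) / 4) / 4 < 1 := by linarith [six_rpow_three_quarters_lt_four]
      _ < Real.sqrt 2 := Real.one_lt_sqrt_two

/-- For `T₂'(x,y) = a(x₁y₁ + x₁y₂) + a(x₃y₁ + x₄y₂) + a(x₃y₅ + x₄y₅)` with `a ≠ 0`
on `ℓ∞⁵ × ℓ∞⁵`: `‖T₂'‖ ≥ 4|a|`, and the Littlewood `4/3` ratio satisfies
`(∑|T₂'(e_i,e_j)|^{4/3})^{3/4} / ‖T₂'‖ ≤ 6^{3/4}/4 < √2`, so `T₂'` is not an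
extremum of Littlewood's `4/3` inequality. -/
theorem stmt13 (a : ℝ) (ha : a ≠ 0)
    (T : (PiLp ⊤ fun _ : Fin 5 => ℝ) →L[ℝ] (PiLp ⊤ fun _ : Fin 5 => ℝ) →L[ℝ] ℝ)
    (hT : ∀ x y : PiLp ⊤ fun _ : Fin 5 => ℝ,
      T x y = a * (x 0 * y 0 + x 0 * y 1) + a * (x 2 * y 0 + x 3 * y 1)
        + a * (x 2 * y 4 + x 3 * y 4)) :
    4 * |a| ≤ ‖T‖
      ∧ (∑ i : Fin 5, ∑ j : Fin 5,
            |T (stdBasis 5 i) (stdBasis 5 j)| ^ ((4 : ℝ) / 3)) ^ ((3 : ℝ) / 4) / ‖T‖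
          ≤ (6 : ℝ) ^ ((3 : ℝ) / 4) / 4
      ∧ (6 : ℝ) ^ ((3 : ℝ) / 4) / 4 < Real.sqrt 2 :=
  stmt13_general a T hT
end

section
/- Define bilinear maps T_{m,p} : ℓ_p^{2^{m−1}} × ⋯ (m factors) → ℝ recursively by T_{2,p}(x,y) = x₁y₁+x₁y₂+x₂y₁−x₂y₂ and T_{m,p}(x⁽¹⁾,…,x⁽ᵐ⁾) = (x₁⁽ᵐ⁾+x₂⁽ᵐ⁾)T_{m−1,p}(x⁽¹⁾,…,x⁽ᵐ⁻¹⁾) + (x₁⁽ᵐ⁾−x₂⁽ᵐ⁾)T_{m−1,p}(B^{2^{m−2}}x⁽¹⁾,…,B² x⁽ᵐ⁻¹⁾). Then ‖T_{m,p}‖ ≤ 2^{m−2} ‖T_{2,p}‖ for all m ≥ 2, where norms are with respect to ℓ_p norms on each factor (p ≥ 2). -/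
open scoped ENNReal

/-- Truncated backward shift: from `ℝ^{2^{k+2}}` (with the `ℓ_q` norm) to
`ℝ^{2^{k+1}}`, sending `v` to `(v_{o+1}, v_{o+2}, …)`. -/
noncomputable def truncShift (q : ℝ≥0∞) (k o : ℕ) (ho : o + 2 ^ (k + 1) ≤ 2 ^ (k + 2))
    (v : PiLp q (fun _ : Fin (2 ^ (k + 2)) => ℝ)) :
    PiLp q (fun _ : Fin (2 ^ (k + 1)) => ℝ) :=
  (WithLp.equiv q (∀ _ : Fin (2 ^ (k + 1)), ℝ)).symm (fun i => v ⟨o + i.1, by omega⟩)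


section aux
variable {p : ℝ}

lemma aux_coord_le (hp : 2 ≤ p) [Fact (1 ≤ ENNReal.ofReal p)]
    {n : ℕ} (v : PiLp (ENNReal.ofReal p) (fun _ : Fin n => ℝ)) (i : Fin n) :
    |v i| ≤ ‖v‖ := by
  have hp0 : 0 < p := by linarith
  have htr : (ENNReal.ofReal p).toReal = p := ENNReal.toReal_ofReal hp0.le
  rw [PiLp.norm_eq_sum (by rw [htr]; exact hp0), htr]
  have h1 : |v i| ^ p ≤ ∑ j, ‖v j‖ ^ p := by
    refine Finset.single_le_sum (f := fun j => ‖v j‖ ^ p) (fun j _ => ?_) (Finset.mem_univ i)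
    positivity
  calc |v i| = (|v i| ^ p) ^ (1 / p) := by
        rw [one_div, Real.rpow_rpow_inv (abs_nonneg _) hp0.ne']
    _ ≤ (∑ j, ‖v j‖ ^ p) ^ (1 / p) := Real.rpow_le_rpow (by positivity) h1 (by positivity)

lemma aux_truncShift_le (hp : 2 ≤ p) [Fact (1 ≤ ENNReal.ofReal p)]
    (k o : ℕ) (ho : o + 2 ^ (k + 1) ≤ 2 ^ (k + 2))
    (v : PiLp (ENNReal.ofReal p) (fun _ : Fin (2 ^ (k + 2)) => ℝ)) :
    ‖truncShift (ENNReal.ofReal p) k o ho v‖ ≤ ‖v‖ := by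
  have hp0 : 0 < p := by linarith
  have htr : (ENNReal.ofReal p).toReal = p := ENNReal.toReal_ofReal hp0.le
  rw [PiLp.norm_eq_sum (by rw [htr]; exact hp0), PiLp.norm_eq_sum (by rw [htr]; exact hp0), htr]
  refine Real.rpow_le_rpow (by positivity) ?_ (by positivity)
  have := Finset.sum_le_sum_of_subset_of_nonneg
    (s := (Finset.univ : Finset (Fin (2 ^ (k + 1)))).map
      ⟨fun i => (⟨o + i.1, by omega⟩ : Fin (2 ^ (k + 2))), by
        intro a b h; simpa [Fin.ext_iff] using h⟩)
    (t := Finset.univ) (f := fun j => ‖v j‖ ^ p)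
    (Finset.subset_univ _) (fun j _ _ => by positivity)
  rw [Finset.sum_map] at this
  exact le_trans (le_of_eq (by rfl)) this

lemma aux_abs_add_sub (a b : ℝ) (M : ℝ) (ha : |a| ≤ M) (hb : |b| ≤ M) :
    |a + b| + |a - b| ≤ 2 * M := by
  rcases abs_cases (a + b) with ⟨h1, _⟩ | ⟨h1, _⟩ <;>
    rcases abs_cases (a - b) with ⟨h2, _⟩ | ⟨h2, _⟩ <;>
    rcases abs_cases a with ⟨h3, _⟩ | ⟨h3, _⟩ <;>
    rcases abs_cases b with ⟨h4, _⟩ | ⟨h4, _⟩ <;>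
    linarith

end aux

/-- The recursively defined `(k+2)`-linear forms `T_{m,p}` (`m = k + 2`) on
`ℓ_p^{2^{m-1}}` satisfy `‖T_{m,p}‖ ≤ 2^{m-2} ‖T_{2,p}‖`. Here `T 0 = T_{2,p}` is
`(x,y) ↦ x₁y₁+x₁y₂+x₂y₁−x₂y₂` and `T (k+1) = T_{k+3,p}` is obtained from `T k` by
`T_{m,p}(x⁽¹⁾,…,x⁽ᵐ⁾) = (x₁⁽ᵐ⁾+x₂⁽ᵐ⁾)T_{m−1,p}(x⁽¹⁾,…,x⁽ᵐ⁻¹⁾)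
  + (x₁⁽ᵐ⁾−x₂⁽ᵐ⁾)T_{m−1,p}(B^{2^{m−2}}x⁽¹⁾,…,B²x⁽ᵐ⁻¹⁾)` with backward shifts. -/

theorem stmt14 (p : ℝ) (hp : 2 ≤ p) [Fact (1 ≤ ENNReal.ofReal p)]
    (T : ∀ k : ℕ, ContinuousMultilinearMap ℝ
      (fun _ : Fin (k + 2) => PiLp (ENNReal.ofReal p) (fun _ : Fin (2 ^ (k + 1)) => ℝ)) ℝ)
    (hbase : ∀ x : ∀ _ : Fin 2, PiLp (ENNReal.ofReal p) (fun _ : Fin (2 ^ (0 + 1)) => ℝ),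
      T 0 x = x 0 ⟨0, by norm_num⟩ * x 1 ⟨0, by norm_num⟩
        + x 0 ⟨0, by norm_num⟩ * x 1 ⟨1, by norm_num⟩
        + x 0 ⟨1, by norm_num⟩ * x 1 ⟨0, by norm_num⟩
        - x 0 ⟨1, by norm_num⟩ * x 1 ⟨1, by norm_num⟩)
    (hrec : ∀ (k : ℕ)
      (x : ∀ _ : Fin (k + 3), PiLp (ENNReal.ofReal p) (fun _ : Fin (2 ^ (k + 2)) => ℝ)),
      T (k + 1) x =
        (x (Fin.last (k + 2)) ⟨0, by positivity⟩ + x (Fin.last (k + 2)) ⟨1, by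
            have : 2 ^ 1 ≤ 2 ^ (k + 2) := Nat.pow_le_pow_right (by norm_num) (by omega)
            omega⟩) *
          T k (fun j => truncShift (ENNReal.ofReal p) k 0
            (by have : 2 ^ (k + 1) ≤ 2 ^ (k + 2) := Nat.pow_le_pow_right (by norm_num) (by omega)
                omega)
            (x j.castSucc))
        + (x (Fin.last (k + 2)) ⟨0, by positivity⟩ - x (Fin.last (k + 2)) ⟨1, by
            have : 2 ^ 1 ≤ 2 ^ (k + 2) := Nat.pow_le_pow_right (by norm_num) (by omega)
            omega⟩) *
          T k (fun j => truncShift (ENNReal.ofReal p) k (2 ^ (k + 1 - j.1))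
            (by have h1 : 2 ^ (k + 1 - j.1) ≤ 2 ^ (k + 1) :=
                  Nat.pow_le_pow_right (by norm_num) (by omega)
                have h2 : 2 ^ (k + 2) = 2 ^ (k + 1) + 2 ^ (k + 1) := by ring
                omega)
            (x j.castSucc))) :
    ∀ k : ℕ, ‖T k‖ ≤ 2 ^ k * ‖T 0‖ := by
  intro k
  induction k with
  | zero => simp
  | succ k ih =>
    have hstep : ‖T (k + 1)‖ ≤ 2 * ‖T k‖ := by
      refine ContinuousMultilinearMap.opNorm_le_bound (by positivity) fun x => ?_
      rw [hrec k x]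
      set a := x (Fin.last (k + 2)) ⟨0, by positivity⟩ with ha
      set b := x (Fin.last (k + 2)) ⟨1, Nat.one_lt_two_pow_iff.mpr (by omega)⟩ with hb
      set P := ∏ j : Fin (k + 2), ‖x j.castSucc‖ with hP
      have hPnn : 0 ≤ P := Finset.prod_nonneg fun j _ => norm_nonneg _
      have hprod1 : ∀ (u : ∀ j : Fin (k + 2),
          PiLp (ENNReal.ofReal p) (fun _ : Fin (2 ^ (k + 1)) => ℝ)),
          (∀ j, ‖u j‖ ≤ ‖x j.castSucc‖) → |T k u| ≤ ‖T k‖ * P := by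
        intro u hu
        calc |T k u| ≤ ‖T k‖ * ∏ j, ‖u j‖ := (T k).le_opNorm u
          _ ≤ ‖T k‖ * P := by
            refine mul_le_mul_of_nonneg_left ?_ (norm_nonneg _)
            exact Finset.prod_le_prod (fun j _ => norm_nonneg _) (fun j _ => hu j)
      have hle : 2 ^ (k + 1) ≤ 2 ^ (k + 2) := Nat.pow_le_pow_right (by norm_num) (by omega)
      have h1 := hprod1 _ (fun j => aux_truncShift_le hp k 0 (by omega) (x j.castSucc))
      have h2 := hprod1 _ (fun j => aux_truncShift_le hp k (2 ^ (k + 1 - j.1))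
        (by have h1' : 2 ^ (k + 1 - j.1) ≤ 2 ^ (k + 1) := Nat.pow_le_pow_right (by norm_num) (by omega)
            have h2' : 2 ^ (k + 2) = 2 ^ (k + 1) + 2 ^ (k + 1) := by ring
            omega) (x j.castSucc))
      have hab : |a + b| + |a - b| ≤ 2 * ‖x (Fin.last (k + 2))‖ :=
        aux_abs_add_sub a b _ (aux_coord_le hp _ _) (aux_coord_le hp _ _)
      have hfin : (∏ i, ‖x i‖) = P * ‖x (Fin.last (k + 2))‖ := by
        rw [Fin.prod_univ_castSucc]
      rw [hfin]
      calc |(a + b) * T k _ + (a - b) * T k _|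
          ≤ |a + b| * |T k _| + |a - b| * |T k _| := by
            refine le_trans (abs_add_le _ _) ?_
            rw [abs_mul, abs_mul]
        _ ≤ |a + b| * (‖T k‖ * P) + |a - b| * (‖T k‖ * P) := by
            exact add_le_add (mul_le_mul_of_nonneg_left h1 (abs_nonneg _))
              (mul_le_mul_of_nonneg_left h2 (abs_nonneg _))
        _ = (|a + b| + |a - b|) * (‖T k‖ * P) := by ring
        _ ≤ (2 * ‖x (Fin.last (k + 2))‖) * (‖T k‖ * P) := by
            refine mul_le_mul_of_nonneg_right hab (by positivity)
        _ = 2 * ‖T k‖ * (P * ‖x (Fin.last (k + 2))‖) := by ring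
    calc ‖T (k + 1)‖ ≤ 2 * ‖T k‖ := hstep
      _ ≤ 2 * (2 ^ k * ‖T 0‖) := by linarith
      _ = 2 ^ (k + 1) * ‖T 0‖ := by ring
end

section
/- For real p ≥ 1 and all x ∈ [0,1], ((1+x)^{p*} + (1−x)^{p*})^{1/p*} / (1+x^p)^{1/p} ≤ 2, where p* = p/(p−1) is the conjugate exponent (for p > 1). -/
/-!
The numerator is the `ℓ_{p*}` norm of `(1 + x, 1 - x)`, which is at most its `ℓ_1` norm `2`
since `p* ≥ 1`; the denominator is at least `1`.
-/

lemma one_le_div_sub_one {p : ℝ} (hp : 1 < p) : 1 ≤ p / (p - 1) := by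
  rw [le_div_iff₀ (by linarith)]
  linarith

lemma rpow_one_add_add_rpow_one_sub_le_two {q x : ℝ} (hq : 1 ≤ q) (hx₀ : -1 ≤ x) (hx₁ : x ≤ 1) :
    ((1 + x) ^ q + (1 - x) ^ q) ^ (1 / q) ≤ 2 :=
  calc ((1 + x) ^ q + (1 - x) ^ q) ^ (1 / q) ≤ (1 + x) + (1 - x) :=
        Real.rpow_add_rpow_le_add (by linarith) (by linarith) hq
    _ = 2 := by ring

/-- For `p > 1`, with `p* = p/(p−1)` its conjugate exponent, and all `x ∈ [0,1]`,
`((1+x)^{p*} + (1−x)^{p*})^{1/p*} / (1+x^p)^{1/p} ≤ 2`. -/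
theorem stmt15 (p : ℝ) (hp : 1 < p) (x : ℝ) (hx : x ∈ Set.Icc (0 : ℝ) 1) :
    ((1 + x) ^ (p / (p - 1)) + (1 - x) ^ (p / (p - 1))) ^ ((p - 1) / p)
      / (1 + x ^ p) ^ (1 / p) ≤ 2 := by
  obtain ⟨hx₀, hx₁⟩ := hx
  have hnum : ((1 + x) ^ (p / (p - 1)) + (1 - x) ^ (p / (p - 1))) ^ ((p - 1) / p) ≤ 2 := by
    rw [← one_div_div p (p - 1)]
    exact rpow_one_add_add_rpow_one_sub_le_two (one_le_div_sub_one hp) (by linarith) hx₁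
  have hden : 1 ≤ (1 + x ^ p) ^ (1 / p) :=
    Real.one_le_rpow (le_add_of_nonneg_right (Real.rpow_nonneg hx₀ p))
      (one_div_nonneg.2 (by linarith))
  have hnum_nonneg : 0 ≤ ((1 + x) ^ (p / (p - 1)) + (1 - x) ^ (p / (p - 1))) ^ ((p - 1) / p) :=
    Real.rpow_nonneg (add_nonneg (Real.rpow_nonneg (by linarith) _)
      (Real.rpow_nonneg (by linarith) _)) _
  exact (div_le_self hnum_nonneg hden).trans hnum
end

section
/- Fix m ≥ 2 and a real K ≥ 1. If an m-linear form U on (ℝⁿ)^m (sup norms) has at most K^m nonzero monomial coefficients, then (∑_{j₁,…,j_m}|U(e_{j₁},…,e_{j_m})|^{2m/(m+1)})^{(m+1)/(2m)} ≤ √K · ‖U‖. -/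
noncomputable def sgn (b : Bool) : ℝ := if b then 1 else -1

lemma sgn_mul_self (b : Bool) : sgn b * sgn b = 1 := by cases b <;> simp [sgn]

lemma ortho1 {n : ℕ} (i i' : Fin n) :
    ∑ e : Fin n → Bool, sgn (e i) * sgn (e i') = if i = i' then (2:ℝ)^n else 0 := by
  have key : ∀ e : Fin n → Bool, sgn (e i) * sgn (e i') =
      ∏ l, ((if l = i then sgn (e l) else 1) * (if l = i' then sgn (e l) else 1)) := by
    intro e
    rw [Finset.prod_mul_distrib, Finset.prod_ite_eq' Finset.univ i (fun l => sgn (e l)),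
      Finset.prod_ite_eq' Finset.univ i' (fun l => sgn (e l))]
    simp
  have swap : (∑ e : Fin n → Bool, ∏ l, ((if l = i then sgn (e l) else 1) *
      (if l = i' then sgn (e l) else 1))) = ∏ l, ∑ b : Bool,
      ((if l = i then sgn b else 1) * (if l = i' then sgn b else 1)) := by
    rw [Finset.prod_univ_sum]
    apply Finset.sum_congr
    · ext e; simp [Fintype.mem_piFinset]
    · intro e _; rfl
  simp only [key]
  rw [swap]
  by_cases h : i = i'
  · subst h
    have : ∀ l : Fin n, (∑ b : Bool, ((if l = i then sgn b else 1) *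
        (if l = i then sgn b else 1))) = 2 := by
      intro l
      by_cases hl : l = i <;> simp [hl, sgn_mul_self, sgn] <;> norm_num
    rw [if_pos rfl, Finset.prod_congr rfl (fun l _ => this l), Finset.prod_const]
    simp
  · rw [if_neg h, Finset.prod_eq_zero (Finset.mem_univ i)]
    have h' : ¬ i = i' := h
    simp [h', sgn]

lemma ortho2 {m n : ℕ} (j k : Fin m → Fin n) :
    ∑ ε : Fin m → Fin n → Bool,
      (∏ s, sgn (ε s (j s))) * (∏ s, sgn (ε s (k s)))
      = if j = k then ((2:ℝ)^n)^m else 0 := by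
  have step : ∀ ε : Fin m → Fin n → Bool,
      (∏ s, sgn (ε s (j s))) * (∏ s, sgn (ε s (k s)))
      = ∏ s, (sgn (ε s (j s)) * sgn (ε s (k s))) := by
    intro ε; rw [Finset.prod_mul_distrib]
  simp only [step]
  have swap : (∑ ε : Fin m → Fin n → Bool, ∏ s, (sgn (ε s (j s)) * sgn (ε s (k s))))
      = ∏ s, ∑ e : Fin n → Bool, (sgn (e (j s)) * sgn (e (k s))) := by
    rw [Finset.prod_univ_sum]
    apply Finset.sum_congr
    · ext e; simp [Fintype.mem_piFinset]
    · intro e _; rfl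
  rw [swap]
  by_cases h : j = k
  · subst h
    simp only [ortho1, if_pos rfl, Finset.prod_const, Finset.card_univ, Fintype.card_fin]
    simp
  · obtain ⟨s, hs⟩ := Function.ne_iff.mp h
    rw [if_neg h, Finset.prod_eq_zero (Finset.mem_univ s)]
    rw [ortho1, if_neg hs]

noncomputable def sv {m n : ℕ} (ε : Fin m → Fin n → Bool) (s : Fin m) :
    PiLp ⊤ (fun _ : Fin n => ℝ) :=
  (WithLp.equiv ⊤ (∀ _ : Fin n, ℝ)).symm (fun i => sgn (ε s i))

lemma sv_eq_sum {m n : ℕ} (ε : Fin m → Fin n → Bool) (s : Fin m) :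
    sv ε s = ∑ i, sgn (ε s i) • stdBasis n i := by
  apply (WithLp.linearEquiv ⊤ ℝ (∀ _ : Fin n, ℝ)).injective
  rw [map_sum]
  simp only [map_smul]
  have h1 : (WithLp.linearEquiv ⊤ ℝ (∀ _ : Fin n, ℝ)) (sv ε s) = fun i => sgn (ε s i) := rfl
  have h2 : ∀ i, (WithLp.linearEquiv ⊤ ℝ (∀ _ : Fin n, ℝ)) (stdBasis n i) =
      Pi.single i (1:ℝ) := fun i => rfl
  rw [h1]
  simp only [h2]
  funext x
  simp [Finset.sum_apply, Pi.single_apply, mul_ite]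

lemma sv_norm {m n : ℕ} (ε : Fin m → Fin n → Bool) (s : Fin m) : ‖sv ε s‖ ≤ 1 := by
  rw [PiLp.norm_eq_ciSup]
  apply Real.iSup_le _ zero_le_one
  intro i
  show ‖sgn (ε s i)‖ ≤ 1
  cases (ε s i) <;> simp [sgn]

lemma expand {m n : ℕ}
    (U : ContinuousMultilinearMap ℝ (fun _ : Fin m => PiLp ⊤ fun _ : Fin n => ℝ) ℝ)
    (ε : Fin m → Fin n → Bool) :
    U (sv ε) = ∑ j : Fin m → Fin n,
      (∏ s, sgn (ε s (j s))) * U (fun s => stdBasis n (j s)) := by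
  have : U (sv ε) = U (fun s => ∑ i, sgn (ε s i) • stdBasis n i) := by
    congr 1; funext s; exact sv_eq_sum ε s
  rw [this]
  show U.toMultilinearMap (fun s => ∑ i, sgn (ε s i) • stdBasis n i) = _
  rw [U.toMultilinearMap.map_sum (g := fun s i => sgn (ε s i) • stdBasis n i)]
  apply Finset.sum_congr rfl
  intro j _
  have := U.toMultilinearMap.map_smul_univ (fun s => sgn (ε s (j s)))
    (fun s => stdBasis n (j s))
  simpa [smul_eq_mul] using this

lemma sumsq {m n : ℕ}
    (U : ContinuousMultilinearMap ℝ (fun _ : Fin m => PiLp ⊤ fun _ : Fin n => ℝ) ℝ) :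
    ∑ j : Fin m → Fin n, (U (fun s => stdBasis n (j s)))^2 ≤ ‖U‖^2 := by
  set a : (Fin m → Fin n) → ℝ := fun j => U (fun s => stdBasis n (j s)) with ha
  have h1 : ∀ ε : Fin m → Fin n → Bool, (U (sv ε))^2 ≤ ‖U‖^2 := by
    intro ε
    have hb : |U (sv ε)| ≤ ‖U‖ := by
      calc |U (sv ε)| = ‖U (sv ε)‖ := rfl
        _ ≤ ‖U‖ * ∏ s, ‖sv ε s‖ := U.le_opNorm _
        _ ≤ ‖U‖ * 1 := by
            apply mul_le_mul_of_nonneg_left _ (norm_nonneg U)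
            apply Finset.prod_le_one (fun s _ => norm_nonneg _) (fun s _ => sv_norm ε s)
        _ = ‖U‖ := mul_one _
    calc (U (sv ε))^2 = |U (sv ε)|^2 := (sq_abs _).symm
      _ ≤ ‖U‖^2 := pow_le_pow_left₀ (abs_nonneg _) hb 2
  set N : ℝ := ((2:ℝ)^n)^m with hN
  have hNpos : 0 < N := by positivity
  have expand2 : ∀ ε : Fin m → Fin n → Bool, (U (sv ε))^2 =
      ∑ j : Fin m → Fin n, ∑ k : Fin m → Fin n,
        ((∏ s, sgn (ε s (j s))) * (∏ s, sgn (ε s (k s)))) * (a j * a k) := by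
    intro ε
    rw [sq, expand U ε, Finset.sum_mul_sum]
    apply Finset.sum_congr rfl; intro j _
    apply Finset.sum_congr rfl; intro k _
    ring
  have h2 : ∑ ε : Fin m → Fin n → Bool, (U (sv ε))^2 = N * ∑ j, a j ^ 2 := by
    simp only [expand2]
    rw [Finset.sum_comm]
    have : ∀ j : Fin m → Fin n, (∑ ε : Fin m → Fin n → Bool, ∑ k : Fin m → Fin n,
        ((∏ s, sgn (ε s (j s))) * (∏ s, sgn (ε s (k s)))) * (a j * a k))
        = N * a j ^ 2 := by
      intro j
      rw [Finset.sum_comm]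
      have : ∀ k : Fin m → Fin n, (∑ ε : Fin m → Fin n → Bool,
          ((∏ s, sgn (ε s (j s))) * (∏ s, sgn (ε s (k s)))) * (a j * a k))
          = (if j = k then N else 0) * (a j * a k) := by
        intro k
        rw [← Finset.sum_mul, ortho2]
      simp only [this, ite_mul, zero_mul]
      rw [Finset.sum_ite_eq Finset.univ j (fun k => N * (a j * a k))]
      simp [sq]
    rw [Finset.sum_congr rfl (fun j _ => this j), ← Finset.mul_sum]
  have h3 : ∑ ε : Fin m → Fin n → Bool, (U (sv ε))^2 ≤ N * ‖U‖^2 := by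
    calc ∑ ε : Fin m → Fin n → Bool, (U (sv ε))^2
        ≤ ∑ _ε : Fin m → Fin n → Bool, ‖U‖^2 := Finset.sum_le_sum (fun ε _ => h1 ε)
      _ = (Fintype.card (Fin m → Fin n → Bool) : ℝ) * ‖U‖^2 := by
          rw [Finset.sum_const, Finset.card_univ, nsmul_eq_mul]
      _ = N * ‖U‖^2 := by
          congr 1
          simp [hN, Fintype.card_fun]
  rw [h2] at h3
  exact le_of_mul_le_mul_left h3 hNpos


/-- Fix `m ≥ 2` and a real `K ≥ 1`. If an `m`-linear form `U` on `(ℝⁿ)^m` (sup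
norms) has at most `K^m` nonzero monomial coefficients, then the
Bohnenblust–Hille sum satisfies
`(∑ |U(e_{j₁},…,e_{j_m})|^{2m/(m+1)})^{(m+1)/(2m)} ≤ √K ‖U‖`. -/
theorem stmt16 (m : ℕ) (hm : 2 ≤ m) (K : ℝ) (hK : 1 ≤ K) (n : ℕ)
    (U : ContinuousMultilinearMap ℝ (fun _ : Fin m => PiLp ⊤ fun _ : Fin n => ℝ) ℝ)
    (hcard : ((Finset.univ.filter
        (fun j : Fin m → Fin n => U (fun s => stdBasis n (j s)) ≠ 0)).card : ℝ) ≤ K ^ m) :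
    (∑ j : Fin m → Fin n,
        |U (fun s => stdBasis n (j s))| ^ ((2 * m : ℝ) / (m + 1))) ^ ((m + 1 : ℝ) / (2 * m))
      ≤ Real.sqrt K * ‖U‖ := by
  classical
  set T : Finset (Fin m → Fin n) := Finset.univ.filter
    (fun j : Fin m → Fin n => U (fun s => stdBasis n (j s)) ≠ 0) with hT
  set a : (Fin m → Fin n) → ℝ := fun j => U (fun s => stdBasis n (j s)) with ha
  set mR : ℝ := (m : ℝ) with hmR
  have hmR2 : (2:ℝ) ≤ mR := by rw [hmR]; exact_mod_cast hm
  have hmR0 : (0:ℝ) < mR := by linarith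
  have hmR1 : (0:ℝ) < mR + 1 := by linarith
  set p : ℝ := (2 * mR) / (mR + 1) with hp
  set r : ℝ := (mR + 1) / (2 * mR) with hr
  have hp0 : 0 < p := by positivity
  have hr0 : 0 < r := by positivity
  set q : ℝ := (mR + 1) / mR with hq
  have hq1 : (1:ℝ) ≤ q := by
    rw [hq, le_div_iff₀ hmR0]; linarith
  have hmne : mR ≠ 0 := ne_of_gt hmR0
  have hm1ne : mR + 1 ≠ 0 := ne_of_gt hmR1
  have e1 : p * q = 2 := by rw [hp, hq]; field_simp
  have e2 : 1/q * r = 1/2 := by rw [hq, hr, one_div_div]; field_simp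
  have e3 : r + -(1/2 : ℝ) = 1/(2*mR) := by rw [hr]; field_simp; ring
  have e4 : mR * (1/(2*mR)) = 1/2 := by field_simp
  set S : ℝ := ∑ j : Fin m → Fin n, |a j| ^ p with hS
  show S ^ r ≤ Real.sqrt K * ‖U‖
  have hSnonneg : 0 ≤ S := Finset.sum_nonneg (fun j _ => Real.rpow_nonneg (abs_nonneg _) p)
  have hsum : S = ∑ j ∈ T, |a j| ^ p := by
    symm
    apply Finset.sum_subset (Finset.subset_univ T)
    intro j _ hj
    have haj : a j = 0 := by
      by_contra h
      exact hj (Finset.mem_filter.mpr ⟨Finset.mem_univ j, h⟩)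
    rw [haj, abs_zero, Real.zero_rpow (ne_of_gt hp0)]
  set Q : ℝ := ∑ j ∈ T, a j ^ 2 with hQdef
  have hQnonneg : 0 ≤ Q := Finset.sum_nonneg (fun j _ => sq_nonneg _)
  have hQ : Q ≤ ‖U‖ ^ 2 := by
    refine le_trans ?_ (sumsq U)
    exact Finset.sum_le_sum_of_subset_of_nonneg (Finset.subset_univ T)
      (fun j _ _ => sq_nonneg _)
  have hU0 : (0:ℝ) ≤ ‖U‖ := norm_nonneg U
  have hsqrtK : (0:ℝ) ≤ Real.sqrt K := Real.sqrt_nonneg K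
  by_cases hk0 : T.card = 0
  · have hTempty : T = ∅ := Finset.card_eq_zero.mp hk0
    have hS0 : S = 0 := by rw [hsum, hTempty, Finset.sum_empty]
    rw [hS0, Real.zero_rpow (ne_of_gt hr0)]
    positivity
  set kR : ℝ := (T.card : ℝ) with hkR
  have hkpos : (0:ℝ) < kR := by
    rw [hkR]
    exact_mod_cast Nat.pos_of_ne_zero hk0
  have hmean := Real.arith_mean_le_rpow_mean T (fun _ => kR⁻¹) (fun j => |a j| ^ p)
    (fun i _ => by positivity)
    (by rw [Finset.sum_const, nsmul_eq_mul, ← hkR, mul_inv_cancel₀ (ne_of_gt hkpos)])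
    (fun i _ => Real.rpow_nonneg (abs_nonneg _) p) hq1
  have hpq : ∀ j : Fin m → Fin n, (|a j| ^ p) ^ q = a j ^ 2 := by
    intro j
    rw [← Real.rpow_mul (abs_nonneg (a j))]
    rw [e1, Real.rpow_two, sq_abs]
  have l1 : ∑ j ∈ T, kR⁻¹ * |a j| ^ p = kR⁻¹ * S := by
    rw [hsum, Finset.mul_sum]
  have l2 : ∑ j ∈ T, kR⁻¹ * (|a j| ^ p) ^ q = kR⁻¹ * Q := by
    rw [hQdef, Finset.mul_sum]
    exact Finset.sum_congr rfl (fun j _ => by rw [hpq j])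
  rw [l1, l2] at hmean
  have hSle : S ≤ kR * (kR⁻¹ * Q) ^ (1/q) := by
    have h := mul_le_mul_of_nonneg_left hmean (le_of_lt hkpos)
    calc S = kR * (kR⁻¹ * S) := by rw [← mul_assoc, mul_inv_cancel₀ (ne_of_gt hkpos), one_mul]
      _ ≤ kR * (kR⁻¹ * Q) ^ (1/q) := h
  have hX0 : (0:ℝ) ≤ kR⁻¹ * Q := mul_nonneg (inv_nonneg.mpr hkpos.le) hQnonneg
  have key : S ^ r ≤ kR ^ (1/(2*mR)) * Q ^ (1/2 : ℝ) := by
    have step1 : S ^ r ≤ (kR * (kR⁻¹ * Q) ^ (1/q)) ^ r :=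
      Real.rpow_le_rpow hSnonneg hSle (le_of_lt hr0)
    have step2 : (kR * (kR⁻¹ * Q) ^ (1/q)) ^ r
        = kR ^ r * ((kR⁻¹ * Q) ^ (1/q)) ^ r :=
      Real.mul_rpow (le_of_lt hkpos) (Real.rpow_nonneg hX0 _)
    have step3 : ((kR⁻¹ * Q) ^ (1/q)) ^ r = (kR⁻¹ * Q) ^ (1/2 : ℝ) := by
      rw [← Real.rpow_mul hX0, e2]
    have step4 : (kR⁻¹ * Q) ^ (1/2 : ℝ) = kR⁻¹ ^ (1/2 : ℝ) * Q ^ (1/2 : ℝ) :=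
      Real.mul_rpow (inv_nonneg.mpr hkpos.le) hQnonneg
    have step5 : kR ^ r * kR⁻¹ ^ (1/2 : ℝ) = kR ^ (1/(2*mR)) := by
      rw [Real.inv_rpow (le_of_lt hkpos), ← Real.rpow_neg (le_of_lt hkpos),
        ← Real.rpow_add hkpos]
      rw [e3]
    calc S ^ r ≤ (kR * (kR⁻¹ * Q) ^ (1/q)) ^ r := step1
      _ = kR ^ r * ((kR⁻¹ * Q) ^ (1/q)) ^ r := step2
      _ = kR ^ r * ((kR⁻¹ * Q) ^ (1/2 : ℝ)) := by rw [step3]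
      _ = (kR ^ r * kR⁻¹ ^ (1/2 : ℝ)) * Q ^ (1/2 : ℝ) := by rw [step4]; ring
      _ = kR ^ (1/(2*mR)) * Q ^ (1/2 : ℝ) := by rw [step5]
  have bound1 : kR ^ (1/(2*mR)) ≤ Real.sqrt K := by
    have hKm : kR ≤ K ^ m := hcard
    have hK0 : (0:ℝ) ≤ K := by linarith
    calc kR ^ (1/(2*mR)) ≤ (K ^ m) ^ (1/(2*mR)) :=
          Real.rpow_le_rpow (le_of_lt hkpos) hKm (by positivity)
      _ = (K ^ (mR : ℝ)) ^ (1/(2*mR)) := by rw [← Real.rpow_natCast K m, hmR]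
      _ = K ^ (mR * (1/(2*mR))) := by rw [← Real.rpow_mul hK0]
      _ = K ^ (1/2 : ℝ) := by rw [e4]
      _ = Real.sqrt K := (Real.sqrt_eq_rpow K).symm
  have bound2 : Q ^ (1/2 : ℝ) ≤ ‖U‖ := by
    calc Q ^ (1/2 : ℝ) = Real.sqrt Q := (Real.sqrt_eq_rpow Q).symm
      _ ≤ Real.sqrt (‖U‖ ^ 2) := Real.sqrt_le_sqrt hQ
      _ = ‖U‖ := Real.sqrt_sq hU0
  calc S ^ r ≤ kR ^ (1/(2*mR)) * Q ^ (1/2 : ℝ) := key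
    _ ≤ Real.sqrt K * ‖U‖ := by
        apply mul_le_mul bound1 bound2 (Real.rpow_nonneg hQnonneg _) hsqrtK
end

section
/- For the bilinear form T_{2,p} : ℓ_p² × ℓ_p² → ℝ, T_{2,p}(x,y) = x₁y₁+x₁y₂+x₂y₁−x₂y₂ with p > 1, the operator norm equals sup_{x∈[0,1]} ((1+x)^{p*}+(1−x)^{p*})^{1/p*} / (1+x^p)^{1/p}, where p* = p/(p−1). -/
/-!
Writing `T(x, y) = (x₀ + x₁) y₀ + (x₀ - x₁) y₁`, Hölder's inequality in `y` gives
`|T(x, y)| ≤ ‖(x₀ + x₁, x₀ - x₁)‖_{p*} ‖y‖_p`, with equality for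
`y = ((x₀ + x₁)^{p*-1}, (x₀ - x₁)^{p*-1})` when both entries are nonnegative. Hence `‖T‖` is the
supremum of `‖(x₀ + x₁, x₀ - x₁)‖_{p*} / ‖x‖_p`. Both norms are invariant under
`(x₀, x₁) ↦ (|x₀|, |x₁|)` and under swapping the entries, and are positively homogeneous, so it
suffices to take `x = (1, t)` with `t ∈ [0, 1]`.
-/

open Real Set

noncomputable def pairLpNorm (r a b : ℝ) : ℝ := (|a| ^ r + |b| ^ r) ^ (1 / r)

noncomputable def t2Ratio (p q t : ℝ) : ℝ := pairLpNorm q (1 + t) (1 - t) / pairLpNorm p 1 t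

section pairLpNorm

variable {r : ℝ}

lemma pairLpNorm_nonneg (r a b : ℝ) : 0 ≤ pairLpNorm r a b := by
  unfold pairLpNorm; positivity

lemma pairLpNorm_one_left_pos (r b : ℝ) : 0 < pairLpNorm r 1 b := by
  unfold pairLpNorm; positivity

lemma pairLpNorm_comm (r a b : ℝ) : pairLpNorm r a b = pairLpNorm r b a := by
  rw [pairLpNorm, pairLpNorm, add_comm]

lemma pairLpNorm_neg_neg (r a b : ℝ) : pairLpNorm r (-a) (-b) = pairLpNorm r a b := by
  simp only [pairLpNorm, abs_neg]

lemma pairLpNorm_abs_abs (r a b : ℝ) : pairLpNorm r |a| |b| = pairLpNorm r a b := by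
  simp only [pairLpNorm, abs_abs]

lemma pairLpNorm_of_nonneg {a b : ℝ} (ha : 0 ≤ a) (hb : 0 ≤ b) :
    pairLpNorm r a b = (a ^ r + b ^ r) ^ (1 / r) := by
  rw [pairLpNorm, abs_of_nonneg ha, abs_of_nonneg hb]

lemma pairLpNorm_mul (hr : r ≠ 0) (c a b : ℝ) :
    pairLpNorm r (c * a) (c * b) = |c| * pairLpNorm r a b := by
  simp only [pairLpNorm, abs_mul]
  rw [mul_rpow (abs_nonneg c) (abs_nonneg a), mul_rpow (abs_nonneg c) (abs_nonneg b), ← mul_add,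
    mul_rpow (by positivity) (by positivity), ← rpow_mul (abs_nonneg c), mul_one_div_cancel hr,
    rpow_one]

lemma pairLpNorm_eq_max_min (r a b : ℝ) :
    pairLpNorm r a b = pairLpNorm r (max |a| |b|) (min |a| |b|) := by
  rcases le_total |a| |b| with h | h
  · rw [max_eq_right h, min_eq_left h, pairLpNorm_comm, pairLpNorm_abs_abs]
  · rw [max_eq_left h, min_eq_right h, pairLpNorm_abs_abs]

lemma pairLpNorm_add_sub (r a b : ℝ) :
    pairLpNorm r (a + b) (a - b) = pairLpNorm r (|a| + |b|) (|a| - |b|) := by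
  rcases le_total 0 a with ha | ha <;> rcases le_total 0 b with hb | hb <;>
    simp only [abs_of_nonneg, abs_of_nonpos, ha, hb]
  · rw [pairLpNorm_comm]; ring_nf
  · rw [pairLpNorm_comm, ← pairLpNorm_neg_neg]; ring_nf
  · rw [← pairLpNorm_neg_neg]; ring_nf

lemma abs_mul_add_mul_le_pairLpNorm_mul {p q : ℝ} (hpq : p.HolderConjugate q) (a b x y : ℝ) :
    |a * x + b * y| ≤ pairLpNorm q a b * pairLpNorm p x y := by
  have := inner_le_Lp_mul_Lq Finset.univ ![|a|, |b|] ![|x|, |y|] hpq.symm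
  simp only [Fin.sum_univ_two, Matrix.cons_val_zero, Matrix.cons_val_one, abs_abs] at this
  calc |a * x + b * y| ≤ |a| * |x| + |b| * |y| := by
        rw [← abs_mul, ← abs_mul]; exact abs_add_le _ _
    _ ≤ pairLpNorm q a b * pairLpNorm p x y := this

end pairLpNorm

lemma exists_mem_Icc_eq_mul {a b : ℝ} (hb : 0 ≤ b) (hba : b ≤ a) :
    ∃ t ∈ Icc (0 : ℝ) 1, b = a * t := by
  rcases (hb.trans hba).eq_or_lt with rfl | ha
  · exact ⟨0, left_mem_Icc.2 zero_le_one, by rw [mul_zero]; exact le_antisymm hba hb⟩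
  · exact ⟨b / a, ⟨div_nonneg hb ha.le, div_le_one_of_le₀ hba ha.le⟩, by field_simp⟩

lemma pairLpNorm_add_sub_le {p q M : ℝ} (hp : p ≠ 0) (hq : q ≠ 0)
    (hM : ∀ t ∈ Icc (0 : ℝ) 1, t2Ratio p q t ≤ M) (a b : ℝ) :
    pairLpNorm q (a + b) (a - b) ≤ M * pairLpNorm p a b := by
  rw [pairLpNorm_eq_max_min p a b, pairLpNorm_add_sub, ← pairLpNorm_abs_abs q,
    abs_of_nonneg (by positivity : 0 ≤ |a| + |b|), ← max_sub_min_eq_abs', ← max_add_min |a| |b|]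
  set A := max |a| |b|
  obtain ⟨t, ht, hB⟩ := exists_mem_Icc_eq_mul (le_min (abs_nonneg a) (abs_nonneg b))
    (min_le_max : min |a| |b| ≤ A)
  have hA : 0 ≤ A := (abs_nonneg a).trans (le_max_left _ _)
  have hratio : pairLpNorm q (1 + t) (1 - t) ≤ M * pairLpNorm p 1 t :=
    (div_le_iff₀ (pairLpNorm_one_left_pos p t)).1 (hM t ht)
  calc pairLpNorm q (A + min |a| |b|) (A - min |a| |b|)
      = pairLpNorm q (A * (1 + t)) (A * (1 - t)) := by rw [hB, mul_one_add, mul_one_sub]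
    _ = A * pairLpNorm q (1 + t) (1 - t) := by rw [pairLpNorm_mul hq, abs_of_nonneg hA]
    _ ≤ A * (M * pairLpNorm p 1 t) := mul_le_mul_of_nonneg_left hratio hA
    _ = M * pairLpNorm p (A * 1) (A * t) := by rw [pairLpNorm_mul hp, abs_of_nonneg hA]; ring
    _ = M * pairLpNorm p A (min |a| |b|) := by rw [mul_one, hB]

lemma mul_rpow_sub_one_self {x q : ℝ} (hx : 0 ≤ x) (hq : q ≠ 0) : x * x ^ (q - 1) = x ^ q := by
  rw [← rpow_one_add' hx (by rwa [add_sub_cancel]), add_sub_cancel]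

lemma pairLpNorm_rpow_sub_one {p q a b : ℝ} (hpq : p.HolderConjugate q) (ha : 0 ≤ a)
    (hb : 0 ≤ b) : pairLpNorm p (a ^ (q - 1)) (b ^ (q - 1)) = (a ^ q + b ^ q) ^ (1 / p) := by
  rw [pairLpNorm_of_nonneg (rpow_nonneg ha _) (rpow_nonneg hb _), ← rpow_mul ha, ← rpow_mul hb,
    hpq.symm.sub_one_mul_conj]

local notation "ℓ²[" p "]" => PiLp (ENNReal.ofReal p) fun _ : Fin 2 => ℝ

lemma PiLp.norm_eq_pairLpNorm {p : ℝ} (hp : 0 < p) (z : ℓ²[p]) : ‖z‖ = pairLpNorm p (z 0) (z 1) := by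
  rw [PiLp.norm_eq_sum (by rwa [ENNReal.toReal_ofReal hp.le])]
  simp [ENNReal.toReal_ofReal hp.le, Fin.sum_univ_two, pairLpNorm]

section bilinear

variable {p q : ℝ} [Fact (1 ≤ ENNReal.ofReal p)] {T : ℓ²[p] →L[ℝ] ℓ²[p] →L[ℝ] ℝ}

lemma t2Ratio_le_opNorm (hpq : p.HolderConjugate q)
    (hT : ∀ x y : ℓ²[p], T x y = x 0 * y 0 + x 0 * y 1 + x 1 * y 0 - x 1 * y 1)
    {t : ℝ} (ht : t ∈ Icc (0 : ℝ) 1) : t2Ratio p q t ≤ ‖T‖ := by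
  obtain ⟨ht0, ht1⟩ := ht
  have hplus : 0 ≤ 1 + t := by linarith
  have hminus : 0 ≤ 1 - t := by linarith
  set S := (1 + t) ^ q + (1 - t) ^ q
  have hS : 0 < S :=
    add_pos_of_pos_of_nonneg (rpow_pos_of_pos (by linarith) q) (rpow_nonneg hminus q)
  let u : ℓ²[p] := WithLp.toLp _ ![1, t]
  let v : ℓ²[p] := WithLp.toLp _ ![(1 + t) ^ (q - 1), (1 - t) ^ (q - 1)]
  have hTuv : T u v = S := by
    rw [hT]
    change 1 * (1 + t) ^ (q - 1) + 1 * (1 - t) ^ (q - 1) + t * (1 + t) ^ (q - 1)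
      - t * (1 - t) ^ (q - 1) = (1 + t) ^ q + (1 - t) ^ q
    rw [← mul_rpow_sub_one_self hplus hpq.symm.ne_zero,
      ← mul_rpow_sub_one_self hminus hpq.symm.ne_zero]
    ring
  have hu : ‖u‖ = pairLpNorm p 1 t := PiLp.norm_eq_pairLpNorm hpq.pos u
  have hv : ‖v‖ = S ^ (1 / p) :=
    (PiLp.norm_eq_pairLpNorm hpq.pos v).trans (pairLpNorm_rpow_sub_one hpq hplus hminus)
  have hsplit : S = S ^ (1 / q) * S ^ (1 / p) := by
    rw [← rpow_add hS, one_div, one_div, add_comm, hpq.inv_add_inv_eq_one, rpow_one]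
  have hle : S ^ (1 / q) * S ^ (1 / p) ≤ ‖T‖ * pairLpNorm p 1 t * S ^ (1 / p) := by
    rw [← hsplit, ← hu, ← hv, ← hTuv]
    exact (Real.le_norm_self _).trans (T.le_opNorm₂ u v)
  rw [t2Ratio, div_le_iff₀ (pairLpNorm_one_left_pos p t), pairLpNorm_of_nonneg hplus hminus]
  exact le_of_mul_le_mul_right hle (rpow_pos_of_pos hS _)

lemma opNorm_le_of_forall_t2Ratio_le (hpq : p.HolderConjugate q)
    (hT : ∀ x y : ℓ²[p], T x y = x 0 * y 0 + x 0 * y 1 + x 1 * y 0 - x 1 * y 1)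
    {M : ℝ} (hM : ∀ t ∈ Icc (0 : ℝ) 1, t2Ratio p q t ≤ M) : ‖T‖ ≤ M := by
  have hM0 : 0 ≤ M := (div_nonneg (pairLpNorm_nonneg _ _ _) (pairLpNorm_nonneg _ _ _)).trans
    (hM 0 (left_mem_Icc.2 zero_le_one))
  refine T.opNorm_le_bound₂ hM0 fun x y => ?_
  rw [hT, Real.norm_eq_abs, PiLp.norm_eq_pairLpNorm hpq.pos x, PiLp.norm_eq_pairLpNorm hpq.pos y]
  calc |x 0 * y 0 + x 0 * y 1 + x 1 * y 0 - x 1 * y 1|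
      = |(x 0 + x 1) * y 0 + (x 0 - x 1) * y 1| := by ring_nf
    _ ≤ pairLpNorm q (x 0 + x 1) (x 0 - x 1) * pairLpNorm p (y 0) (y 1) :=
        abs_mul_add_mul_le_pairLpNorm_mul hpq _ _ _ _
    _ ≤ M * pairLpNorm p (x 0) (x 1) * pairLpNorm p (y 0) (y 1) :=
        mul_le_mul_of_nonneg_right (pairLpNorm_add_sub_le hpq.ne_zero hpq.symm.ne_zero hM _ _)
          (pairLpNorm_nonneg _ _ _)

end bilinear

/-- For `p > 1` the bilinear form `T_{2,p}(x,y) = x₁y₁+x₁y₂+x₂y₁−x₂y₂` on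
`ℓ_p² × ℓ_p²` has operator norm
`sup_{x∈[0,1]} ((1+x)^{p*}+(1−x)^{p*})^{1/p*} / (1+x^p)^{1/p}`, `p* = p/(p−1)`. -/
theorem stmt18 (p : ℝ) (hp : 1 < p) [Fact (1 ≤ ENNReal.ofReal p)]
    (T : (PiLp (ENNReal.ofReal p) fun _ : Fin 2 => ℝ) →L[ℝ]
      (PiLp (ENNReal.ofReal p) fun _ : Fin 2 => ℝ) →L[ℝ] ℝ)
    (hT : ∀ x y : PiLp (ENNReal.ofReal p) fun _ : Fin 2 => ℝ,
      T x y = x 0 * y 0 + x 0 * y 1 + x 1 * y 0 - x 1 * y 1) :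
    ‖T‖ = ⨆ x : Set.Icc (0 : ℝ) 1,
      ((1 + (x : ℝ)) ^ (p / (p - 1)) + (1 - (x : ℝ)) ^ (p / (p - 1))) ^ ((p - 1) / p)
        / (1 + (x : ℝ) ^ p) ^ (1 / p) := by
  have hpq : p.HolderConjugate (p / (p - 1)) := (holderConjugate_iff_eq_conjExponent hp).2 rfl
  have hlub : IsLUB (range fun t : Icc (0 : ℝ) 1 => t2Ratio p (p / (p - 1)) t) ‖T‖ :=
    ⟨forall_mem_range.2 fun t => t2Ratio_le_opNorm hpq hT t.2,
      fun M hM => opNorm_le_of_forall_t2Ratio_le hpq hT fun t ht => hM ⟨⟨t, ht⟩, rfl⟩⟩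
  rw [← hlub.ciSup_eq]
  refine iSup_congr fun ⟨t, ht0, ht1⟩ => ?_
  rw [t2Ratio, pairLpNorm_of_nonneg (by linarith) (by linarith),
    pairLpNorm_of_nonneg zero_le_one ht0, one_rpow, one_div_div]
end

section
/- There is no exponent η with 1 ≤ η ≤ 2 such that (∑_{j₁,…,j_m}|T(e_{j₁},…,e_{j_m})|^η)^{1/η} ≤ ‖T‖ holds for all m-linear forms T on (ℓ_pⁿ)^m with p finite and m ≥ 2; indeed any valid η must satisfy η ≥ 2(m−1)/(log₂(sup_{x∈[0,1]} ((1+x)^{p*}+(1−x)^{p*})^{1/p*}/(1+x^p)^{1/p}) + (m−2)) > 2. -/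
/-!
Test the inequality on `ℓ_p²` with the `m`-linear form `T(x) = B(x₀, x₁) · x₂(0) ⋯ x_{m-1}(0)`,
where `B(y, z) = (y₀ + y₁) z₀ + (y₀ - y₁) z₁` is the bilinear form of the `2 × 2` Hadamard matrix.
`T` has four unimodular coefficients, so the inequality gives `4 ^ (1/η) ≤ ‖T‖ ≤ ‖B‖`.
By Hölder's inequality `‖B‖ ≤ sup_y ‖(y₀ + y₁, y₀ - y₁)‖_{p*} / ‖y‖_p`, and by homogeneity and the
symmetries of `B` this supremum is the constant `S` of the statement. Hence `η ≥ 2 / log₂ S`,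
which dominates the stated bound because `1 < S < 2`: the ratio is `2 ^ (1/p*)` at `x = 0` and
is `< 2` at every point of the compact interval `[0, 1]`. Padding a bilinear form thus already
does better than the recursive forms `T_{m,p}`.
-/

noncomputable def stdBasisLp (q : ENNReal) (n : ℕ) (i : Fin n) :
    PiLp q (fun _ : Fin n => ℝ) :=
  (WithLp.equiv q (∀ _ : Fin n, ℝ)).symm (Pi.single i 1)

open Real Set Finset
open scoped ENNReal

noncomputable def hadamardRatio (p x : ℝ) : ℝ :=
  ((1 + x) ^ (p / (p - 1)) + (1 - x) ^ (p / (p - 1))) ^ ((p - 1) / p) / (1 + x ^ p) ^ (1 / p)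

noncomputable def hadamardConst (p : ℝ) : ℝ :=
  ⨆ x : Icc (0 : ℝ) 1, hadamardRatio p x

lemma mul_rpow_add_mul_rpow_rpow_inv {c a b r : ℝ} (hc : 0 ≤ c) (ha : 0 ≤ a) (hb : 0 ≤ b)
    (hr : r ≠ 0) : ((c * a) ^ r + (c * b) ^ r) ^ r⁻¹ = c * (a ^ r + b ^ r) ^ r⁻¹ := by
  rw [mul_rpow hc ha, mul_rpow hc hb, ← mul_add,
    mul_rpow (rpow_nonneg hc r) (by positivity), rpow_rpow_inv hc hr]

lemma abs_sum_mul_le_Lp_mul_Lq {ι : Type*} (s : Finset ι) (f g : ι → ℝ) {p q : ℝ}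
    (hpq : p.HolderConjugate q) :
    |∑ i ∈ s, f i * g i| ≤ (∑ i ∈ s, |f i| ^ p) ^ (1 / p) * (∑ i ∈ s, |g i| ^ q) ^ (1 / q) := by
  refine abs_le'.2 ⟨inner_le_Lp_mul_Lq s f g hpq, ?_⟩
  simpa [sum_neg_distrib] using inner_le_Lp_mul_Lq s (-f) g hpq

lemma norm_piLp_ofReal_eq {ι : Type*} [Fintype ι] {p : ℝ} (hp : 0 < p)
    (y : PiLp (ENNReal.ofReal p) fun _ : ι ↦ ℝ) : ‖y‖ = (∑ i, |y i| ^ p) ^ (1 / p) := by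
  have hp' : (ENNReal.ofReal p).toReal = p := ENNReal.toReal_ofReal hp.le
  simp only [PiLp.norm_eq_sum (hp'.symm ▸ hp), hp', Real.norm_eq_abs]

section HadamardConst

variable {p : ℝ}

lemma hadamardRatio_zero (hp : 1 < p) : hadamardRatio p 0 = 2 ^ ((p - 1) / p) := by
  simp only [hadamardRatio, add_zero, sub_zero, one_rpow, zero_rpow (by positivity : p ≠ 0),
    div_one, one_add_one_eq_two]

lemma hadamardRatio_lt_two (hp : 1 < p) {x : ℝ} (hx : x ∈ Icc (0 : ℝ) 1) :
    hadamardRatio p x < 2 := by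
  rcases hx.1.eq_or_lt with rfl | hx0
  · rw [hadamardRatio_zero hp]
    calc (2 : ℝ) ^ ((p - 1) / p) < 2 ^ (1 : ℝ) :=
          rpow_lt_rpow_of_exponent_lt one_lt_two ((div_lt_one (by positivity)).2 (by linarith))
      _ = 2 := rpow_one 2
  have hnum : ((1 + x) ^ (p / (p - 1)) + (1 - x) ^ (p / (p - 1))) ^ ((p - 1) / p) ≤ 2 := by
    have h := rpow_add_rpow_le_add (p := p / (p - 1)) (by linarith : 0 ≤ 1 + x)
      (by linarith [hx.2] : 0 ≤ 1 - x) ((one_le_div (by linarith)).2 (by linarith))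
    rwa [one_div_div, add_add_sub_cancel, one_add_one_eq_two] at h
  have hden : 1 < (1 + x ^ p) ^ (1 / p) :=
    one_lt_rpow (by linarith [rpow_pos_of_pos hx0 p]) (by positivity)
  rw [hadamardRatio, div_lt_iff₀ (by linarith)]
  linarith

lemma continuousOn_hadamardRatio (hp : 1 < p) : ContinuousOn (hadamardRatio p) (Icc 0 1) := by
  have hp0 : 0 < p := by linarith
  have hq0 : 0 < p - 1 := by linarith
  refine ContinuousOn.div (by fun_prop (disch := first | positivity | (intro; right; positivity)))
    (by fun_prop (disch := first | positivity | (intro; right; positivity))) fun x hx ↦ ?_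
  exact (rpow_pos_of_pos (by linarith [rpow_nonneg hx.1 p]) _).ne'

lemma bddAbove_hadamardRatio (hp : 1 < p) :
    BddAbove (range fun x : Icc (0 : ℝ) 1 ↦ hadamardRatio p x) :=
  ⟨2, forall_mem_range.2 fun x ↦ (hadamardRatio_lt_two hp x.2).le⟩

lemma hadamardRatio_le_hadamardConst (hp : 1 < p) {x : ℝ} (hx : x ∈ Icc (0 : ℝ) 1) :
    hadamardRatio p x ≤ hadamardConst p :=
  le_ciSup (bddAbove_hadamardRatio hp) ⟨x, hx⟩

lemma one_lt_hadamardConst (hp : 1 < p) : 1 < hadamardConst p := by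
  refine lt_of_lt_of_le ?_ (hadamardRatio_le_hadamardConst hp (left_mem_Icc.2 zero_le_one))
  rw [hadamardRatio_zero hp]
  exact one_lt_rpow one_lt_two (div_pos (by linarith) (by linarith))

lemma hadamardConst_lt_two (hp : 1 < p) : hadamardConst p < 2 := by
  obtain ⟨x, hx, hmax⟩ := isCompact_Icc.exists_isMaxOn (nonempty_Icc.2 zero_le_one)
    (continuousOn_hadamardRatio hp)
  exact (ciSup_le fun y ↦ hmax y.2).trans_lt (hadamardRatio_lt_two hp hx)

lemma hadamard_bound_of_le (hp : 1 < p) {u v : ℝ} (hv : 0 ≤ v) (hvu : v ≤ u) :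
    ((u + v) ^ (p / (p - 1)) + (u - v) ^ (p / (p - 1))) ^ ((p - 1) / p)
      ≤ hadamardConst p * (u ^ p + v ^ p) ^ (1 / p) := by
  have hp0 : 0 < p := by linarith
  have hq0 : 0 < p / (p - 1) := div_pos hp0 (by linarith)
  have hq : (p - 1) / p = (p / (p - 1))⁻¹ := (inv_div _ _).symm
  rcases (hv.trans hvu).eq_or_lt with rfl | hu
  · obtain rfl : v = 0 := le_antisymm hvu hv
    simp only [add_zero, sub_self, zero_rpow hq0.ne', zero_rpow hp0.ne', hq, one_div,
      zero_rpow (inv_pos.2 hq0).ne', zero_rpow (inv_pos.2 hp0).ne', mul_zero, le_refl]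
  set t := v / u
  have ht : t ∈ Icc (0 : ℝ) 1 := ⟨div_nonneg hv hu.le, (div_le_one hu).2 hvu⟩
  have hv : v = u * t := (mul_div_cancel₀ v hu.ne').symm
  have hnum := mul_rpow_add_mul_rpow_rpow_inv hu.le (a := 1 + t) (b := 1 - t)
    (by linarith [ht.1]) (by linarith [ht.2]) hq0.ne'
  rw [mul_one_add, mul_one_sub, ← hv, ← hq] at hnum
  have hden := mul_rpow_add_mul_rpow_rpow_inv hu.le zero_le_one ht.1 hp0.ne'
  rw [mul_one, one_rpow, ← hv, ← one_div] at hden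
  have hratio := hadamardRatio_le_hadamardConst hp ht
  rw [hadamardRatio, div_le_iff₀ (rpow_pos_of_pos (by linarith [rpow_nonneg ht.1 p]) _)] at hratio
  rw [hnum, hden, mul_left_comm]
  exact mul_le_mul_of_nonneg_left hratio hu.le

lemma hadamard_bound (hp : 1 < p) (a b : ℝ) :
    (|a + b| ^ (p / (p - 1)) + |a - b| ^ (p / (p - 1))) ^ ((p - 1) / p)
      ≤ hadamardConst p * (|a| ^ p + |b| ^ p) ^ (1 / p) := by
  wlog hba : |b| ≤ |a| generalizing a b
  · simpa only [add_comm b a, abs_sub_comm b a, add_comm (|b| ^ p)] using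
      this b a (le_of_not_ge hba)
  wlog hb : 0 ≤ b generalizing b
  · have h := this (-b) (by rwa [abs_neg]) (by linarith)
    rwa [← sub_eq_add_neg, sub_neg_eq_add, abs_neg, add_comm (|a - b| ^ _)] at h
  wlog ha : 0 ≤ a generalizing a
  · have h := this (-a) (by rwa [abs_neg]) (by linarith)
    rwa [neg_add_eq_sub, abs_sub_comm, ← neg_add', abs_neg, abs_neg,
      add_comm (|a - b| ^ _)] at h
  rw [abs_of_nonneg ha, abs_of_nonneg hb] at hba ⊢
  rw [abs_of_nonneg (by linarith), abs_of_nonneg (by linarith)]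
  exact hadamard_bound_of_le hp hb hba

end HadamardConst

section PaddedBilinearForm

variable (q : ℝ≥0∞) (k : ℕ) {n : ℕ} [NeZero n]

def padIndex (a b : Fin n) : Fin (k + 2) → Fin n := Fin.cons a (Fin.cons b 0)

lemma padIndex_injective2 : Function.Injective2 (padIndex k : Fin n → Fin n → _) := by
  intro a a' b b' h
  simp only [padIndex, Fin.cons_inj] at h
  exact ⟨h.1, h.2.1⟩

noncomputable def paddedBilinearForm (c : Fin n → Fin n → ℝ) :
    ContinuousMultilinearMap ℝ (fun _ : Fin (k + 2) ↦ PiLp q fun _ : Fin n ↦ ℝ) ℝ :=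
  ∑ a, ∑ b, c a b •
    (ContinuousMultilinearMap.mkPiAlgebra ℝ (Fin (k + 2)) ℝ).compContinuousLinearMap
      fun s ↦ PiLp.proj q (fun _ : Fin n ↦ ℝ) (padIndex k a b s)

variable {q k}

lemma paddedBilinearForm_apply (c : Fin n → Fin n → ℝ)
    (x : Fin (k + 2) → PiLp q fun _ : Fin n ↦ ℝ) :
    paddedBilinearForm q k c x = ∑ a, ∑ b, c a b * ∏ s, x s (padIndex k a b s) := by
  simp [paddedBilinearForm]

lemma paddedBilinearForm_apply_eq_mul_prod (c : Fin n → Fin n → ℝ)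
    (x : Fin (k + 2) → PiLp q fun _ : Fin n ↦ ℝ) :
    paddedBilinearForm q k c x
      = (∑ a, ∑ b, c a b * x 0 a * x 1 b) * ∏ i : Fin k, x i.succ.succ 0 := by
  simp [paddedBilinearForm_apply, Fin.prod_univ_succ, padIndex, Finset.sum_mul, mul_assoc]

lemma paddedBilinearForm_stdBasisLp (c : Fin n → Fin n → ℝ) (j : Fin (k + 2) → Fin n) :
    paddedBilinearForm q k c (fun s ↦ stdBasisLp q n (j s))
      = ∑ a, ∑ b, if padIndex k a b = j then c a b else 0 := by
  simp only [paddedBilinearForm_apply, stdBasisLp, WithLp.equiv_symm_apply, Pi.single_apply,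
    Finset.prod_boole, Finset.mem_univ, forall_const, mul_ite, mul_one, mul_zero, funext_iff]

lemma sum_abs_paddedBilinearForm_stdBasisLp_rpow {η : ℝ} (hη : 0 < η) (c : Fin n → Fin n → ℝ) :
    ∑ j : Fin (k + 2) → Fin n, |paddedBilinearForm q k c (fun s ↦ stdBasisLp q n (j s))| ^ η
      = ∑ a, ∑ b, |c a b| ^ η := by
  rw [← Fintype.sum_prod_type']
  refine (Fintype.sum_of_injective (fun ab ↦ padIndex k ab.1 ab.2)
    (padIndex_injective2 k).uncurry _ _ (fun j hj ↦ ?_) fun ab ↦ ?_).symm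
  · rw [paddedBilinearForm_stdBasisLp, Finset.sum_eq_zero, abs_zero, zero_rpow hη.ne']
    exact fun a _ ↦ Finset.sum_eq_zero fun b _ ↦ if_neg fun h ↦ hj ⟨(a, b), h⟩
  · simp [paddedBilinearForm_stdBasisLp, (padIndex_injective2 k).eq_iff, ite_and]

lemma norm_paddedBilinearForm_le [Fact (1 ≤ q)] (c : Fin n → Fin n → ℝ) {M : ℝ} (hM : 0 ≤ M)
    (hc : ∀ y z : PiLp q (fun _ : Fin n ↦ ℝ), |∑ a, ∑ b, c a b * y a * z b| ≤ M * ‖y‖ * ‖z‖) :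
    ‖paddedBilinearForm q k c‖ ≤ M := by
  refine ContinuousMultilinearMap.opNorm_le_bound hM fun x ↦ ?_
  rw [paddedBilinearForm_apply_eq_mul_prod, Real.norm_eq_abs, abs_mul, Finset.abs_prod,
    Fin.prod_univ_succ, Fin.prod_univ_succ, ← mul_assoc, ← mul_assoc]
  refine mul_le_mul (hc _ _) (Finset.prod_le_prod (fun _ _ ↦ abs_nonneg _) fun i _ ↦ ?_)
    (by positivity) (by positivity)
  simpa only [Real.norm_eq_abs] using PiLp.norm_apply_le (x i.succ.succ) 0

end PaddedBilinearForm

def hadamardMatrix : Fin 2 → Fin 2 → ℝ := ![![1, 1], ![1, -1]]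

lemma abs_hadamardMatrix (a b : Fin 2) : |hadamardMatrix a b| = 1 := by
  fin_cases a <;> fin_cases b <;> simp [hadamardMatrix]

lemma abs_hadamardMatrix_bilinear_le {p : ℝ} (hp : 1 < p) [Fact (1 ≤ ENNReal.ofReal p)]
    (y z : PiLp (ENNReal.ofReal p) fun _ : Fin 2 ↦ ℝ) :
    |∑ a, ∑ b, hadamardMatrix a b * y a * z b| ≤ hadamardConst p * ‖y‖ * ‖z‖ := by
  have hp0 : 0 < p := by linarith
  have hHy : ∑ a, ∑ b, hadamardMatrix a b * y a * z b
      = ∑ i, ![y 0 + y 1, y 0 - y 1] i * z i := by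
    simp only [hadamardMatrix, Fin.sum_univ_two, Matrix.cons_val_zero, Matrix.cons_val_one,
      Matrix.cons_val_fin_one, Fin.isValue]
    ring
  have holder := abs_sum_mul_le_Lp_mul_Lq univ ![y 0 + y 1, y 0 - y 1] z
    ((holderConjugate_iff_eq_conjExponent hp).2 rfl).symm
  rw [hHy, norm_piLp_ofReal_eq hp0, norm_piLp_ofReal_eq hp0]
  simp only [one_div_div, Fin.sum_univ_two] at holder ⊢
  refine holder.trans (mul_le_mul_of_nonneg_right ?_
    (by positivity : (0 : ℝ) ≤ (|z 0| ^ p + |z 1| ^ p) ^ (1 / p)))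
  simpa using hadamard_bound hp (y 0) (y 1)

lemma two_le_logb_mul_of_four_rpow_le {S η : ℝ} (hη : 0 < η) (h : (4 : ℝ) ^ (1 / η) ≤ S) :
    2 ≤ logb 2 S * η := by
  have h4 : (4 : ℝ) ^ (1 / η) = 2 ^ (2 / η) := by
    rw [show (4 : ℝ) = 2 ^ (2 : ℝ) by norm_num, ← rpow_mul zero_le_two, mul_one_div]
  rw [h4] at h
  have hS : 0 < S := (rpow_pos_of_pos two_pos _).trans_le h
  exact (div_le_iff₀ hη).1 ((le_logb_iff_rpow_le one_lt_two hS).2 h)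

lemma two_lt_two_mul_sub_one_div {L m : ℝ} (hL0 : 0 < L) (hL1 : L < 1) (hm : 2 ≤ m) :
    2 < 2 * (m - 1) / (L + (m - 2)) := by
  rw [lt_div_iff₀ (by linarith)]
  linarith

lemma two_mul_sub_one_div_le {L m η : ℝ} (hL0 : 0 < L) (hL1 : L < 1) (hm : 2 ≤ m)
    (hLη : 2 ≤ L * η) : 2 * (m - 1) / (L + (m - 2)) ≤ η := by
  have hη : 2 ≤ η := by nlinarith
  rw [div_le_iff₀ (by linarith)]
  nlinarith

/-- For finite `p` (`p > 1`) and `m ≥ 2`, any exponent `η ≥ 1` such that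
`(∑|T(e_{j₁},…,e_{j_m})|^η)^{1/η} ≤ ‖T‖` holds for all `m`-linear forms `T` on
`(ℓ_pⁿ)^m` (all `n`) must satisfy
`η ≥ 2(m−1)/(log₂(sup_{x∈[0,1]} ((1+x)^{p*}+(1−x)^{p*})^{1/p*}/(1+x^p)^{1/p}) + (m−2))`,
and this lower bound is `> 2`; in particular no such `η` with `1 ≤ η ≤ 2` exists. -/
theorem stmt19 (p : ℝ) (hp : 1 < p) [Fact (1 ≤ ENNReal.ofReal p)]
    (m : ℕ) (hm : 2 ≤ m) (η : ℝ) (hη : 1 ≤ η)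
    (hineq : ∀ (n : ℕ)
      (T : ContinuousMultilinearMap ℝ
        (fun _ : Fin m => PiLp (ENNReal.ofReal p) (fun _ : Fin n => ℝ)) ℝ),
      (∑ j : Fin m → Fin n,
          |T (fun s => stdBasisLp (ENNReal.ofReal p) n (j s))| ^ η) ^ (1 / η) ≤ ‖T‖) :
    (2 * ((m : ℝ) - 1)) /
        (Real.logb 2 (⨆ x : Set.Icc (0 : ℝ) 1,
          ((1 + (x : ℝ)) ^ (p / (p - 1)) + (1 - (x : ℝ)) ^ (p / (p - 1))) ^ ((p - 1) / p)
            / (1 + (x : ℝ) ^ p) ^ (1 / p)) + ((m : ℝ) - 2)) ≤ η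
      ∧ 2 < (2 * ((m : ℝ) - 1)) /
        (Real.logb 2 (⨆ x : Set.Icc (0 : ℝ) 1,
          ((1 + (x : ℝ)) ^ (p / (p - 1)) + (1 - (x : ℝ)) ^ (p / (p - 1))) ^ ((p - 1) / p)
            / (1 + (x : ℝ) ^ p) ^ (1 / p)) + ((m : ℝ) - 2)) := by
  have hη0 : 0 < η := by linarith
  have hS1 := one_lt_hadamardConst hp
  have hL0 : 0 < logb 2 (hadamardConst p) := logb_pos one_lt_two hS1
  have hL1 : logb 2 (hadamardConst p) < 1 := by
    rw [logb_lt_iff_lt_rpow one_lt_two (by linarith), rpow_one]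
    exact hadamardConst_lt_two hp
  obtain ⟨k, rfl⟩ : ∃ k, m = k + 2 := ⟨m - 2, by omega⟩
  have hm' : (2 : ℝ) ≤ ((k + 2 : ℕ) : ℝ) := by exact_mod_cast hm
  have h4 : (4 : ℝ) ^ (1 / η) ≤ hadamardConst p := by
    have h := hineq 2 (paddedBilinearForm (ENNReal.ofReal p) k hadamardMatrix)
    have h4 : ∑ a, ∑ b, |hadamardMatrix a b| ^ η = 4 := by
      simp only [abs_hadamardMatrix, one_rpow, Fin.sum_univ_two]
      norm_num
    rw [sum_abs_paddedBilinearForm_stdBasisLp_rpow hη0, h4] at h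
    exact h.trans (norm_paddedBilinearForm_le _ (by linarith) (abs_hadamardMatrix_bilinear_le hp))
  have hLη := two_le_logb_mul_of_four_rpow_le hη0 h4
  exact ⟨two_mul_sub_one_div_le hL0 hL1 hm' hLη,
    two_lt_two_mul_sub_one_div hL0 hL1 hm'⟩
end
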